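/- Let (K,P,{b}) be a labeled ALCI-KB with a single negative example b and Σ = sig(K). Then the following conditions are equivalent: (1) (K,P,{b}) is non-projectively ALCI-separable; (2) there exists a forest model A of K of finite outdegree such that for all a ∈ P there is no model B of K with B,a^B ∼_{ALCI,Σ} A,b^A. -/

import Mathlib

namespace Sep

/-! ## First-order syntax over relation symbols (arity, code) and variables ℕ.
Constants are natural numbers; formulas contain no constants. -/

inductive Fml : Type where
  | eq : ℕ → ℕ → Fml
  | rel : (k : ℕ) → ℕ → (Fin k → ℕ) → Fml
  | neg : Fml → Fml
  | and : Fml → Fml → Fml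
  | or : Fml → Fml → Fml
  | ex : ℕ → Fml → Fml
  | all : ℕ → Fml → Fml

namespace Fml

/-- Implication, as an abbreviation. -/
def imp (φ ψ : Fml) : Fml := .or (.neg φ) ψ

/-- Free variables of a formula. -/
def free : Fml → Set ℕ
  | eq x y => {x, y}
  | rel _ _ v => Set.range v
  | neg φ => φ.free
  | and φ ψ => φ.free ∪ ψ.free
  | or φ ψ => φ.free ∪ ψ.free
  | ex y φ => φ.free \ {y}
  | all y φ => φ.free \ {y}

/-- All variables (free or bound) occurring in a formula. -/
def vars : Fml → Set ℕ
  | eq x y => {x, y}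
  | rel _ _ v => Set.range v
  | neg φ => φ.vars
  | and φ ψ => φ.vars ∪ ψ.vars
  | or φ ψ => φ.vars ∪ ψ.vars
  | ex y φ => insert y φ.vars
  | all y φ => insert y φ.vars

/-- Variables occurring in equality atoms of a formula. -/
def eqVars : Fml → Set ℕ
  | eq x y => {x, y}
  | rel _ _ _ => ∅
  | neg φ => φ.eqVars
  | and φ ψ => φ.eqVars ∪ ψ.eqVars
  | or φ ψ => φ.eqVars ∪ ψ.eqVars
  | ex _ φ => φ.eqVars
  | all _ φ => φ.eqVars

/-- The signature (set of relation symbols, as pairs (arity, code)) of a formula. -/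
def sig : Fml → Set (ℕ × ℕ)
  | eq _ _ => ∅
  | rel k R _ => {(k, R)}
  | neg φ => φ.sig
  | and φ ψ => φ.sig ∪ ψ.sig
  | or φ ψ => φ.sig ∪ ψ.sig
  | ex _ φ => φ.sig
  | all _ φ => φ.sig

/-- Size of a formula (number of symbols, names counting as one symbol). -/
def size : Fml → ℕ
  | eq _ _ => 3
  | rel k _ _ => 1 + k
  | neg φ => 1 + φ.size
  | and φ ψ => 1 + φ.size + ψ.size
  | or φ ψ => 1 + φ.size + ψ.size
  | ex _ φ => 2 + φ.size
  | all _ φ => 2 + φ.size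

/-- Subformulas of a formula. -/
def subfmls : Fml → Set Fml
  | eq x y => {.eq x y}
  | rel k R v => {.rel k R v}
  | neg φ => insert (.neg φ) φ.subfmls
  | and φ ψ => insert (.and φ ψ) (φ.subfmls ∪ ψ.subfmls)
  | or φ ψ => insert (.or φ ψ) (φ.subfmls ∪ ψ.subfmls)
  | ex y φ => insert (.ex y φ) φ.subfmls
  | all y φ => insert (.all y φ) φ.subfmls

end Fml

/-- Conjunction of a list of formulas (`x₀ = x₀` as the empty conjunction). -/
def bigAnd : List Fml → Fml
  | [] => .eq 0 0
  | [φ] => φ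
  | φ :: ψ :: rest => .and φ (bigAnd (ψ :: rest))

/-- Disjunction of a list of formulas. -/
def bigOr : List Fml → Fml
  | [] => .neg (.eq 0 0)
  | [φ] => φ
  | φ :: ψ :: rest => .or φ (bigOr (ψ :: rest))

/-- Existential quantification over a list of variables. -/
def exList (ys : List ℕ) (φ : Fml) : Fml := ys.foldr Fml.ex φ

/-- Universal quantification over a list of variables. -/
def allList (ys : List ℕ) (φ : Fml) : Fml := ys.foldr Fml.all φ

/-- The atom `R(x₀,…,x_{k-1})` over the fixed tuple of distinct variables `0,…,k-1`. -/
def baseAtom (k R : ℕ) : Fml := .rel k R fun i => (i : ℕ)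

/-- The formula `∃ y⃗₁ (R(x⃗_k) ∧ ¬ x_u = x_w)` where `y⃗₁` is `x⃗_k` without `x_u`. -/
def connFml (k R u w : ℕ) : Fml :=
  exList ((List.range k).filter fun y => y != u) (.and (baseAtom k R) (.neg (.eq u w)))

/-! ## Structures and satisfaction -/

/-- A relational structure: a nonempty domain, interpretations of all relation
symbols, and interpretations of all constants (no unique name assumption). -/
structure Str : Type 1 where
  Dom : Type
  dom_nonempty : Nonempty Dom
  rel : (k : ℕ) → ℕ → (Fin k → Dom) → Prop
  const : ℕ → Dom

namespace Fml

/-- Satisfaction of a formula in a structure under a variable assignment. -/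
def Sat (A : Str) : Fml → (ℕ → A.Dom) → Prop
  | eq x y, v => v x = v y
  | rel k R args, v => A.rel k R fun i => v (args i)
  | neg φ, v => ¬ φ.Sat A v
  | and φ ψ, v => φ.Sat A v ∧ ψ.Sat A v
  | or φ ψ, v => φ.Sat A v ∨ ψ.Sat A v
  | ex y φ, v => ∃ d : A.Dom, φ.Sat A (Function.update v y d)
  | all y φ, v => ∀ d : A.Dom, φ.Sat A (Function.update v y d)

/-- Satisfaction relativized to a subset of the domain (quantifiers range over the subset). -/
def SatIn (A : Str) (Dsub : Set A.Dom) : Fml → (ℕ → A.Dom) → Prop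
  | eq x y, v => v x = v y
  | rel k R args, v => A.rel k R fun i => v (args i)
  | neg φ, v => ¬ φ.SatIn A Dsub v
  | and φ ψ, v => φ.SatIn A Dsub v ∧ ψ.SatIn A Dsub v
  | or φ ψ, v => φ.SatIn A Dsub v ∨ ψ.SatIn A Dsub v
  | ex y φ, v => ∃ d ∈ Dsub, φ.SatIn A Dsub (Function.update v y d)
  | all y φ, v => ∀ d ∈ Dsub, φ.SatIn A Dsub (Function.update v y d)

end Fml

/-! ## Databases and knowledge bases -/

/-- A ground atom `R(a⃗)` over constants (natural numbers). -/
structure Atom : Type where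
  arity : ℕ
  rel : ℕ
  args : Fin arity → ℕ

/-- Rename the constants of an atom. -/
def Atom.mapC (f : ℕ → ℕ) (a : Atom) : Atom := ⟨a.arity, a.rel, f ∘ a.args⟩

/-- An atom holds in a structure under an interpretation of the constants. -/
def Atom.Holds (a : Atom) (A : Str) (h : ℕ → A.Dom) : Prop :=
  A.rel a.arity a.rel fun i => h (a.args i)

/-- A database: a finite set of ground atoms. -/
structure Database : Type where
  atoms : Set Atom
  finite : atoms.Finite

/-- The constants occurring in a database. -/
def Database.consts (D : Database) : Set ℕ := ⋃ a ∈ D.atoms, Set.range a.args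

lemma Database.consts_finite (D : Database) : D.consts.Finite :=
  D.finite.biUnion fun _ _ => Set.finite_range _

/-- Number of constants of a database (used as its size `|D|`). -/
noncomputable def Database.csize (D : Database) : ℕ := D.consts.ncard

/-- The signature of a database. -/
def Database.sig (D : Database) : Set (ℕ × ℕ) := (fun a => (a.arity, a.rel)) '' D.atoms

/-- Two constants are adjacent in the Gaifman graph of a database. -/
def Database.adj (D : Database) (c d : ℕ) : Prop :=
  ∃ a ∈ D.atoms, c ∈ Set.range a.args ∧ d ∈ Set.range a.args

/-- Restriction of a database to the atoms containing a constant reachable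
from the set `S` in the Gaifman graph. -/
def Database.conRestrictSet (D : Database) (S : Set ℕ) : Database where
  atoms := {a | a ∈ D.atoms ∧ ∃ c ∈ S, ∃ d ∈ Set.range a.args, Relation.ReflTransGen D.adj c d}
  finite := D.finite.subset fun _ ha => ha.1

/-- `D_{con(a⃗)}`: restriction of `D` to the constants reachable from `[a⃗]`. -/
def Database.conRestrict (D : Database) {n : ℕ} (t : Fin n → ℕ) : Database :=
  D.conRestrictSet (Set.range t)

/-- A knowledge base: a finite ontology (set of formulas) and a database. -/
structure KB : Type where
  onto : Set Fml
  onto_finite : onto.Finite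
  db : Database

/-- The signature of a KB. -/
def KB.sig (K : KB) : Set (ℕ × ℕ) := (⋃ φ ∈ K.onto, φ.sig) ∪ K.db.sig

/-- Size of the ontology of a KB. -/
noncomputable def KB.ontoSize (K : KB) : ℕ := K.onto_finite.toFinset.sum Fml.size

/-- A structure is a model of a KB if it satisfies every sentence of the
ontology and every ground atom of the database. -/
def Str.IsModel (A : Str) (K : KB) : Prop :=
  (∀ φ ∈ K.onto, ∀ v : ℕ → A.Dom, φ.Sat A v) ∧ ∀ a ∈ K.db.atoms, a.Holds A A.const

/-- Satisfiability of a KB. -/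
def KB.Satisfiable (K : KB) : Prop := ∃ A : Str, A.IsModel K

/-- `K ⊨ φ(t⃗)`: every model of `K` satisfies `φ` at the tuple of constants `t⃗`. -/
def KB.entails (K : KB) {n : ℕ} (φ : Fml) (t : Fin n → ℕ) : Prop :=
  ∀ A : Str, A.IsModel K → ∀ v : ℕ → A.Dom, (∀ i : Fin n, v i.1 = A.const (t i)) → φ.Sat A v

/-! ## Separability -/

/-- `φ(x₀,…,x_{n-1})` (weakly) separates `(K, P, N)`. -/
def Separates {n : ℕ} (K : KB) (P N : Set (Fin n → ℕ)) (φ : Fml) : Prop :=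
  (∀ m ∈ φ.free, m < n) ∧ (∀ a ∈ P, K.entails φ a) ∧ ∀ b ∈ N, ¬ K.entails φ b

/-- `φ(x₀,…,x_{n-1})` strongly separates `(K, P, N)`. -/
def StronglySeparates {n : ℕ} (K : KB) (P N : Set (Fin n → ℕ)) (φ : Fml) : Prop :=
  (∀ m ∈ φ.free, m < n) ∧ (∀ a ∈ P, K.entails φ a) ∧ ∀ b ∈ N, K.entails (Fml.neg φ) b

/-- Projective separability in a language `L` (arbitrary helper symbols allowed). -/
def ProjSeparable (L : Set Fml) {n : ℕ} (K : KB) (P N : Set (Fin n → ℕ)) : Prop :=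
  ∃ φ ∈ L, Separates K P N φ

/-- Non-projective separability in a language `L` (only symbols of `sig(K)`). -/
def NonProjSeparable (L : Set Fml) {n : ℕ} (K : KB) (P N : Set (Fin n → ℕ)) : Prop :=
  ∃ φ ∈ L, φ.sig ⊆ K.sig ∧ Separates K P N φ

/-- Projective strong separability in a language `L`. -/
def ProjStronglySeparable (L : Set Fml) {n : ℕ} (K : KB) (P N : Set (Fin n → ℕ)) : Prop :=
  ∃ φ ∈ L, StronglySeparates K P N φ

/-- Non-projective strong separability in a language `L`. -/
def NonProjStronglySeparable (L : Set Fml) {n : ℕ} (K : KB) (P N : Set (Fin n → ℕ)) : Prop :=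
  ∃ φ ∈ L, φ.sig ⊆ K.sig ∧ StronglySeparates K P N φ

/-- A fragment of FO: a set of formulas closed under conjunction. -/
def IsFragment (L : Set Fml) : Prop := ∀ φ ∈ L, ∀ ψ ∈ L, Fml.and φ ψ ∈ L

/-! ## Homomorphisms from databases to structures -/

/-- `h` is a homomorphism from the database `D` into the structure `A`
(constants need not be preserved). -/
def DbHom (D : Database) (A : Str) (h : ℕ → A.Dom) : Prop :=
  ∀ a ∈ D.atoms, a.Holds A h

/-- `D,t⃗ → A,g⃗`: a homomorphism of pointed structures. -/
def PointedHom (D : Database) {n : ℕ} (t : Fin n → ℕ) (A : Str) (g : Fin n → A.Dom) : Prop :=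
  ∃ h : ℕ → A.Dom, DbHom D A h ∧ ∀ i : Fin n, h (t i) = g i

/-! ## The canonical CQ of a pointed database -/

/-- The variable associated with a constant `c` by the canonical CQ of `(D, t⃗)`:
the least answer variable `i` with `t i = c` if it exists, otherwise `n + c`. -/
noncomputable def varOf {n : ℕ} (t : Fin n → ℕ) (c : ℕ) : ℕ :=
  if ∃ i : Fin n, t i = c then sInf {m : ℕ | ∃ h : m < n, t ⟨m, h⟩ = c} else n + c

lemma Database.qvars_finite (D : Database) {n : ℕ} (t : Fin n → ℕ) :
    (D.consts \ Set.range t).Finite :=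
  D.consts_finite.subset Set.diff_subset

/-- The canonical CQ `φ_{D,t⃗}(x₀,…,x_{n-1})` of a pointed database. -/
noncomputable def canonCQ (D : Database) {n : ℕ} (t : Fin n → ℕ) : Fml :=
  exList ((D.qvars_finite t).toFinset.toList.map fun c => n + c)
    (bigAnd
      ((D.finite.toFinset.toList.map fun a =>
          Fml.rel a.arity a.rel fun i => varOf t (a.args i))
        ++
       ((List.finRange n ×ˢ List.finRange n).filterMap fun p =>
          if t p.1 = t p.2 then some (Fml.eq p.1.1 p.2.1) else none)))

/-- The canonical UCQ `⋁_{a⃗ ∈ P} φ_{D_{con(a⃗)},a⃗}`. -/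
noncomputable def canonUCQ (K : KB) {n : ℕ} (P : Set (Fin n → ℕ)) (hP : P.Finite) : Fml :=
  bigOr (hP.toFinset.toList.map fun t => canonCQ (K.db.conRestrict t) t)

/-! ## The merged database `D_{a⃗ = b⃗}` -/

/-- Equivalence identifying (the code of) `a i` with (the code of) the copy of `b i`. -/
def mergeEquiv {n : ℕ} (a b : Fin n → ℕ) : ℕ → ℕ → Prop :=
  Relation.ReflTransGen fun x y =>
    (∃ i : Fin n, x = 2 * a i ∧ y = 2 * b i + 1) ∨ ∃ i : Fin n, y = 2 * a i ∧ x = 2 * b i + 1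

/-- Canonical representative of the equivalence class. -/
noncomputable def mergeRep {n : ℕ} (a b : Fin n → ℕ) (x : ℕ) : ℕ :=
  sInf {y | mergeEquiv a b x y}

/-- `D_{a⃗ = b⃗}`: the union of `D` with a disjoint copy of itself in which
`a i` is identified with the copy of `b i`, for every `i`. -/
noncomputable def Database.merge (D : Database) {n : ℕ} (a b : Fin n → ℕ) : Database where
  atoms := (Atom.mapC (fun c => mergeRep a b (2 * c)) '' D.atoms) ∪
           (Atom.mapC (fun c => mergeRep a b (2 * c + 1)) '' D.atoms)
  finite := (D.finite.image _).union (D.finite.image _)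

/-! ## Fragments of FO -/

/-- Atomic formulas: equalities and relational atoms. -/
inductive IsAtomic : Fml → Prop
  | eq (x y : ℕ) : IsAtomic (.eq x y)
  | rel (k R : ℕ) (v : Fin k → ℕ) : IsAtomic (.rel k R v)

/-- Relational atoms. -/
inductive IsRelAtom : Fml → Prop
  | rel (k R : ℕ) (v : Fin k → ℕ) : IsRelAtom (.rel k R v)

/-- Conjunctions of atomic formulas. -/
inductive IsQFConj : Fml → Prop
  | atom {φ : Fml} : IsAtomic φ → IsQFConj φ
  | and {φ ψ : Fml} : IsQFConj φ → IsQFConj ψ → IsQFConj (.and φ ψ)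

/-- Conjunctive queries: existentially quantified conjunctions of relational
atoms and equalities between free variables. -/
inductive IsCQ : Fml → Prop
  | base {φ : Fml} : IsQFConj φ → IsCQ φ
  | ex {φ : Fml} (y : ℕ) : IsCQ φ → y ∉ φ.eqVars → IsCQ (.ex y φ)

/-- Unions of conjunctive queries: disjunctions of CQs with the same free variables. -/
inductive IsUCQ : Fml → Prop
  | cq {φ : Fml} : IsCQ φ → IsUCQ φ
  | or {φ ψ : Fml} : IsUCQ φ → IsUCQ ψ → φ.free = ψ.free → IsUCQ (.or φ ψ)

def UCQs : Set Fml := {φ | IsUCQ φ}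

/-- The guarded fragment GF. -/
inductive IsGF : Fml → Prop
  | eq (x y : ℕ) : IsGF (.eq x y)
  | rel (k R : ℕ) (v : Fin k → ℕ) : IsGF (.rel k R v)
  | neg {φ : Fml} : IsGF φ → IsGF (.neg φ)
  | and {φ ψ : Fml} : IsGF φ → IsGF ψ → IsGF (.and φ ψ)
  | or {φ ψ : Fml} : IsGF φ → IsGF ψ → IsGF (.or φ ψ)
  | exg (ys : List ℕ) {α φ : Fml} : IsAtomic α → IsGF φ → φ.free ⊆ α.free →
      (∀ y ∈ ys, y ∈ α.free) → IsGF (exList ys (.and α φ))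
  | allg (ys : List ℕ) {α φ : Fml} : IsAtomic α → IsGF φ → φ.free ⊆ α.free →
      (∀ y ∈ ys, y ∈ α.free) → IsGF (allList ys (α.imp φ))

def GFs : Set Fml := {φ | IsGF φ}

/-- The open guarded fragment openGF: all subformulas are open and equality is
never used as a guard. -/
inductive IsOpenGF : Fml → Prop
  | eq (x y : ℕ) : IsOpenGF (.eq x y)
  | rel (k R : ℕ) (v : Fin k → ℕ) : 0 < k → IsOpenGF (.rel k R v)
  | neg {φ : Fml} : IsOpenGF φ → IsOpenGF (.neg φ)
  | and {φ ψ : Fml} : IsOpenGF φ → IsOpenGF ψ → IsOpenGF (.and φ ψ)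
  | or {φ ψ : Fml} : IsOpenGF φ → IsOpenGF ψ → IsOpenGF (.or φ ψ)
  | exg (ys : List ℕ) {α φ : Fml} : IsRelAtom α → IsOpenGF φ → φ.free ⊆ α.free →
      (∀ y ∈ ys, y ∈ α.free) → ((Fml.and α φ).free \ {y | y ∈ ys}).Nonempty →
      IsOpenGF (exList ys (.and α φ))
  | allg (ys : List ℕ) {α φ : Fml} : IsRelAtom α → IsOpenGF φ → φ.free ⊆ α.free →
      (∀ y ∈ ys, y ∈ α.free) → ((α.imp φ).free \ {y | y ∈ ys}).Nonempty →
      IsOpenGF (allList ys (α.imp φ))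

def OpenGFs : Set Fml := {φ | IsOpenGF φ}

/-- The guarded negation fragment GNFO. -/
inductive IsGNFO : Fml → Prop
  | eq (x y : ℕ) : IsGNFO (.eq x y)
  | rel (k R : ℕ) (v : Fin k → ℕ) : IsGNFO (.rel k R v)
  | and {φ ψ : Fml} : IsGNFO φ → IsGNFO ψ → IsGNFO (.and φ ψ)
  | or {φ ψ : Fml} : IsGNFO φ → IsGNFO ψ → IsGNFO (.or φ ψ)
  | ex (y : ℕ) {φ : Fml} : IsGNFO φ → IsGNFO (.ex y φ)
  | gneg {α φ : Fml} : IsAtomic α → IsGNFO φ → φ.free ⊆ α.free → IsGNFO (.and α (.neg φ))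

def GNFOs : Set Fml := {φ | IsGNFO φ}

/-- The two-variable fragment FO²: only the two fixed variables `0` and `1` are used. -/
def FO2s : Set Fml := {φ : Fml | φ.vars ⊆ {0, 1}}

/-- Two variables are adjacent in the Gaifman graph of a formula (they co-occur
in an atom of the formula). -/
def Fml.varAdj (φ : Fml) (x y : ℕ) : Prop :=
  ∃ ψ ∈ φ.subfmls, IsAtomic ψ ∧ x ∈ ψ.free ∧ y ∈ ψ.free

/-- A rooted CQ: every variable is reachable from an answer (free) variable in
the Gaifman graph of the CQ. -/
def IsRootedCQ (φ : Fml) : Prop :=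
  IsCQ φ ∧ ∀ x ∈ φ.vars, ∃ u ∈ φ.free, Relation.ReflTransGen φ.varAdj u x

/-- Rooted UCQs. -/
inductive IsRootedUCQ : Fml → Prop
  | cq {φ : Fml} : IsRootedCQ φ → IsRootedUCQ φ
  | or {φ ψ : Fml} : IsRootedUCQ φ → IsRootedUCQ ψ → φ.free = ψ.free → IsRootedUCQ (.or φ ψ)

/-! ## ALCI concepts -/

/-- ALCI concepts: `⊤`, concept names, `¬`, `⊓`, and `∃R.C`/`∃R⁻.C`
(the Boolean indicates an inverse role). -/
inductive Concept : Type where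
  | top : Concept
  | atom : ℕ → Concept
  | neg : Concept → Concept
  | inter : Concept → Concept → Concept
  | exRole : Bool → ℕ → Concept → Concept

namespace Concept

/-- Extension of a concept in a structure. -/
def interp (A : Str) : Concept → Set A.Dom
  | top => Set.univ
  | atom c => {d | A.rel 1 c ![d]}
  | neg C => (C.interp A)ᶜ
  | inter C D => C.interp A ∩ D.interp A
  | exRole inv R C => {d | ∃ e ∈ C.interp A, if inv then A.rel 2 R ![e, d] else A.rel 2 R ![d, e]}

/-- Signature of a concept. -/
def csig : Concept → Set (ℕ × ℕ)
  | top => ∅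
  | atom c => {(1, c)}
  | neg C => C.csig
  | inter C D => C.csig ∪ D.csig
  | exRole _ R C => insert (2, R) C.csig

/-- Size of a concept. -/
def size : Concept → ℕ
  | top => 1
  | atom _ => 1
  | neg C => 1 + C.size
  | inter C D => 1 + C.size + D.size
  | exRole _ _ C => 2 + C.size

/-- Subconcepts of a concept. -/
def subconcepts : Concept → Set Concept
  | top => {top}
  | atom c => {atom c}
  | neg C => insert (neg C) C.subconcepts
  | inter C D => insert (inter C D) (C.subconcepts ∪ D.subconcepts)
  | exRole i R C => insert (exRole i R C) C.subconcepts

/-- The standard translation of a concept into an FO formula with free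
variable `x ∈ {0,1}` (the other of the two variables is `1 - x`). -/
def toFml : Concept → ℕ → Fml
  | top, x => .eq x x
  | atom c, x => .rel 1 c ![x]
  | neg C, x => .neg (C.toFml x)
  | inter C D, x => .and (C.toFml x) (D.toFml x)
  | exRole inv R C, x =>
      .ex (1 - x) (.and (if inv then Fml.rel 2 R ![1 - x, x] else Fml.rel 2 R ![x, 1 - x])
        (C.toFml (1 - x)))

end Concept

/-- ALCI concepts, viewed as FO formulas in the free variable `x₀`. -/
def ALCIs : Set Fml := {φ | ∃ C : Concept, φ = C.toFml 0}

/-! ## ALCI knowledge bases, types, bisimulations -/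

/-- The FO translation `∀x₀∀x₁ (C(x₀) → D(x₀))` of a concept inclusion. -/
def CIfml (p : Concept × Concept) : Fml :=
  .all 1 (.all 0 ((p.1.toFml 0).imp (p.2.toFml 0)))

/-- An ALCI knowledge base: a finite set of concept inclusions together with a
database containing only unary and binary atoms. -/
structure ALCIKB : Type where
  onto : Set (Concept × Concept)
  onto_finite : onto.Finite
  db : Database
  db_arity : ∀ a ∈ db.atoms, a.arity = 1 ∨ a.arity = 2

/-- The underlying FO knowledge base of an ALCI KB. -/
def ALCIKB.toKB (K : ALCIKB) : KB where
  onto := CIfml '' K.onto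
  onto_finite := K.onto_finite.image _
  db := K.db

/-- Signature of an ALCI KB. -/
def ALCIKB.sigK (K : ALCIKB) : Set (ℕ × ℕ) := K.toKB.sig

/-- Size of the ontology of an ALCI KB. -/
noncomputable def ALCIKB.ontoSize (K : ALCIKB) : ℕ :=
  K.onto_finite.toFinset.sum fun p => p.1.size + p.2.size + 1

/-- `cl(K)`: the concepts occurring in `K` together with `∃R.⊤`, `∃R⁻.⊤` for all
role names of `sig(K)`, closed under subconcepts and single negation. -/
def ALCIKB.cl (K : ALCIKB) : Set Concept :=
  ((⋃ p ∈ K.onto, p.1.subconcepts ∪ p.2.subconcepts) ∪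
     (⋃ C ∈ {C : Concept | ∃ a ∈ K.db.atoms, a.arity = 1 ∧ C = Concept.atom a.rel}, C.subconcepts) ∪
     (⋃ C ∈ {C : Concept | ∃ R i, ((2 : ℕ), R) ∈ K.sigK ∧ C = Concept.exRole i R Concept.top},
        C.subconcepts)) ∪
  Concept.neg ''
    ((⋃ p ∈ K.onto, p.1.subconcepts ∪ p.2.subconcepts) ∪
     (⋃ C ∈ {C : Concept | ∃ a ∈ K.db.atoms, a.arity = 1 ∧ C = Concept.atom a.rel}, C.subconcepts) ∪
     (⋃ C ∈ {C : Concept | ∃ R i, ((2 : ℕ), R) ∈ K.sigK ∧ C = Concept.exRole i R Concept.top},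
        C.subconcepts))

/-- `tp_K(A, d)`: the `K`-type of `d` in `A`. -/
def ALCIKB.tp (K : ALCIKB) (A : Str) (d : A.Dom) : Set Concept :=
  {C | C ∈ K.cl ∧ d ∈ C.interp A}

/-- `t` is a `K`-type: it is realized in some model of `K`. -/
def ALCIKB.IsType (K : ALCIKB) (t : Set Concept) : Prop :=
  ∃ A : Str, A.IsModel K.toKB ∧ ∃ d : A.Dom, K.tp A d = t

/-- `t` is realizable in `K, b`. -/
def ALCIKB.RealizableAt (K : ALCIKB) (b : ℕ) (t : Set Concept) : Prop :=
  ∃ A : Str, A.IsModel K.toKB ∧ K.tp A (A.const b) = t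

/-- A type is connected if it contains `∃R.⊤` for some role `R`. -/
def TypeConnected (t : Set Concept) : Prop :=
  ∃ i R, Concept.exRole i R Concept.top ∈ t

/-- `ρ = (inv, R)` is a role (a role name or its inverse); `roleHolds A ρ d e`
says that `(d, e)` is in the extension of the role. -/
def roleHolds (A : Str) (ρ : Bool × ℕ) (d e : A.Dom) : Prop :=
  if ρ.1 then A.rel 2 ρ.2 ![e, d] else A.rel 2 ρ.2 ![d, e]

/-- `S` is a Σ-bisimulation (for ALCI) between `A` and `B`. -/
structure IsALCIBisim (sg : Set (ℕ × ℕ)) (A B : Str) (S : Set (A.Dom × B.Dom)) : Prop where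
  atom : ∀ p ∈ S, ∀ c : ℕ, (1, c) ∈ sg → (A.rel 1 c ![p.1] ↔ B.rel 1 c ![p.2])
  forth : ∀ p ∈ S, ∀ ρ : Bool × ℕ, (2, ρ.2) ∈ sg →
    ∀ d' : A.Dom, roleHolds A ρ p.1 d' → ∃ e' : B.Dom, roleHolds B ρ p.2 e' ∧ (d', e') ∈ S
  back : ∀ p ∈ S, ∀ ρ : Bool × ℕ, (2, ρ.2) ∈ sg →
    ∀ e' : B.Dom, roleHolds B ρ p.2 e' → ∃ d' : A.Dom, roleHolds A ρ p.1 d' ∧ (d', e') ∈ S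

/-- `A,d ∼_{ALCI,Σ} B,e`. -/
def ALCIBisimilar (sg : Set (ℕ × ℕ)) (A : Str) (d : A.Dom) (B : Str) (e : B.Dom) : Prop :=
  ∃ S : Set (A.Dom × B.Dom), IsALCIBisim sg A B S ∧ (d, e) ∈ S

/-- A `K`-type `t` is ALCI-complete. -/
def ALCIKB.TypeComplete (K : ALCIKB) (t : Set Concept) : Prop :=
  ∀ A B : Str, A.IsModel K.toKB → B.IsModel K.toKB → ∀ (d : A.Dom) (e : B.Dom),
    K.tp A d = t → K.tp B e = t → ALCIBisimilar K.sigK A d B e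

/-- `(K,P,N)` is strongly incomplete: no connected `K`-type realizable at some
negative example is ALCI-complete. -/
def ALCIKB.StronglyIncomplete (K : ALCIKB) (N : Set ℕ) : Prop :=
  ∀ t : Set Concept, TypeConnected t → (∃ b ∈ N, K.RealizableAt b t) → ¬ K.TypeComplete t

/-- `t₁ ⇝_ρ t₂`: the types are `ρ`-coherent. -/
def ALCIKB.Coherent (K : ALCIKB) (t₁ t₂ : Set Concept) (ρ : Bool × ℕ) : Prop :=
  ∃ A : Str, A.IsModel K.toKB ∧ ∃ d e : A.Dom, K.tp A d = t₁ ∧ K.tp A e = t₂ ∧ roleHolds A ρ d e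

/-- The sequence `t₀ ρ₀ … ρ_n t_{n+1}` witnesses ALCI-incompleteness of the type `t`. -/
def ALCIKB.WitSeq (K : ALCIKB) (t : Set Concept) (n : ℕ)
    (ts : Fin (n + 2) → Set Concept) (ρs : Fin (n + 1) → Bool × ℕ) : Prop :=
  1 ≤ n ∧
  ts 0 = t ∧
  (∀ i : Fin (n + 2), K.IsType (ts i)) ∧
  (∀ i : Fin (n + 1), ((2 : ℕ), (ρs i).2) ∈ K.sigK) ∧
  (∀ i : Fin (n + 1), K.Coherent (ts i.castSucc) (ts i.succ) (ρs i)) ∧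
  ∃ A : Str, A.IsModel K.toKB ∧ ∃ d e : A.Dom,
    roleHolds A (ρs ⟨n - 1, by omega⟩) d e ∧
    K.tp A d = ts ⟨n - 1, by omega⟩ ∧ K.tp A e = ts ⟨n, by omega⟩ ∧
    ¬ ∃ f : A.Dom, K.tp A f = ts ⟨n + 1, by omega⟩ ∧ roleHolds A (ρs ⟨n, by omega⟩) e f

/-! ### Weak and strong separability by ALCI concepts -/

/-- A concept `C` (weakly) separates `(K, P, N)`. -/
def ALCIKB.SeparatesC (K : ALCIKB) (P N : Set ℕ) (C : Concept) : Prop :=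
  (∀ a ∈ P, ∀ A : Str, A.IsModel K.toKB → A.const a ∈ C.interp A) ∧
  ∀ b ∈ N, ¬ ∀ A : Str, A.IsModel K.toKB → A.const b ∈ C.interp A

/-- A concept `C` strongly separates `(K, P, N)`. -/
def ALCIKB.StronglySeparatesC (K : ALCIKB) (P N : Set ℕ) (C : Concept) : Prop :=
  (∀ a ∈ P, ∀ A : Str, A.IsModel K.toKB → A.const a ∈ C.interp A) ∧
  ∀ b ∈ N, ∀ A : Str, A.IsModel K.toKB → A.const b ∉ C.interp A

/-- Non-projective ALCI-separability of a labeled ALCI KB. -/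
def ALCIKB.CSeparable (K : ALCIKB) (P N : Set ℕ) : Prop :=
  ∃ C : Concept, C.csig ⊆ K.sigK ∧ K.SeparatesC P N C

/-- Projective ALCI-separability of a labeled ALCI KB. -/
def ALCIKB.CProjSeparable (K : ALCIKB) (P N : Set ℕ) : Prop :=
  ∃ C : Concept, K.SeparatesC P N C

/-- Non-projective strong ALCI-separability of a labeled ALCI KB. -/
def ALCIKB.CStronglySeparable (K : ALCIKB) (P N : Set ℕ) : Prop :=
  ∃ C : Concept, C.csig ⊆ K.sigK ∧ K.StronglySeparatesC P N C

/-! ### ALCI(Σ)-embeddings -/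

/-- An ALCI(Σ)-embedding of a (unary/binary) database into a structure. -/
def ALCIEmbed (sg : Set (ℕ × ℕ)) (D : Database) (A : Str) (S : Set (ℕ × A.Dom)) : Prop :=
  (∀ p ∈ S, ∀ c : ℕ, (⟨1, c, ![p.1]⟩ : Atom) ∈ D.atoms → A.rel 1 c ![p.2]) ∧
  (∀ p ∈ S, ∀ q ∈ S, p.1 = q.1 → ALCIBisimilar sg A p.2 A q.2) ∧
  (∀ p ∈ S, ∀ R a', (⟨2, R, ![p.1, a']⟩ : Atom) ∈ D.atoms →
      ∃ b' : A.Dom, A.rel 2 R ![p.2, b'] ∧ (a', b') ∈ S) ∧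
  (∀ p ∈ S, ∀ R a', (⟨2, R, ![a', p.1]⟩ : Atom) ∈ D.atoms →
      ∃ b' : A.Dom, A.rel 2 R ![b', p.2] ∧ (a', b') ∈ S)

/-- `D,a ≼_Σ A,d`: some ALCI(Σ)-embedding contains `(a, d)`. -/
def ALCIEmbeddable (sg : Set (ℕ × ℕ)) (D : Database) (a : ℕ) (A : Str) (d : A.Dom) : Prop :=
  ∃ S : Set (ℕ × A.Dom), ALCIEmbed sg D A S ∧ (a, d) ∈ S

/-! ### Forest models -/

/-- There is a role edge from `d` to `e` (in either direction). -/
def Str.RoleEdge (A : Str) (d e : A.Dom) : Prop :=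
  ∃ R, A.rel 2 R ![d, e] ∨ A.rel 2 R ![e, d]

/-- `(d, e)` is an edge induced by a binary database atom. -/
def Str.DbEdge (A : Str) (K : ALCIKB) (d e : A.Dom) : Prop :=
  ∃ R x y, (⟨2, R, ![x, y]⟩ : Atom) ∈ K.db.atoms ∧ d = A.const x ∧ e = A.const y

/-- A role edge that is not induced by the database. -/
def Str.TreeEdge (A : Str) (K : ALCIKB) (d e : A.Dom) : Prop :=
  A.RoleEdge d e ∧ ¬ A.DbEdge K d e ∧ ¬ A.DbEdge K e d

/-- The graph of tree edges. -/
def Str.forestGraph (A : Str) (K : ALCIKB) : SimpleGraph A.Dom where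
  Adj d e := d ≠ e ∧ A.TreeEdge K d e
  symm := ⟨by
    rintro d e ⟨hne, ⟨R, hR⟩, h1, h2⟩
    exact ⟨hne.symm, ⟨R, hR.symm⟩, h2, h1⟩⟩
  loopless := ⟨fun d h => h.1 rfl⟩

/-- `A` is a forest model of the ALCI KB `K`: a model that is the disjoint union
of tree-shaped structures, one rooted at each `c^A` for `c ∈ cons(D)`, extended
with the edges induced by the binary database atoms. -/
def Str.IsForestModel (A : Str) (K : ALCIKB) : Prop :=
  A.IsModel K.toKB ∧
  (∀ k R t, A.rel k R t → k = 1 ∨ k = 2) ∧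
  (∀ d : A.Dom, A.RoleEdge d d → A.DbEdge K d d) ∧
  (A.forestGraph K).IsAcyclic ∧
  (∀ d : A.Dom, ∃ c ∈ K.db.consts, (A.forestGraph K).Reachable (A.const c) d) ∧
  (∀ c ∈ K.db.consts, ∀ c' ∈ K.db.consts, A.const c ≠ A.const c' →
      ¬ (A.forestGraph K).Reachable (A.const c) (A.const c'))

/-- `A` has finite outdegree. -/
def Str.FiniteOutdegree (A : Str) : Prop :=
  ∀ d : A.Dom, {e : A.Dom | A.RoleEdge d e}.Finite

/-! ## Guarded bisimulations -/

/-- A set of domain elements is guarded in a structure. -/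
def Str.GuardedSet (A : Str) (G : Set A.Dom) : Prop :=
  (∃ d, G = {d}) ∨ ∃ k R, ∃ t : Fin k → A.Dom, A.rel k R t ∧ G = Set.range t

/-- A tuple is guarded in a structure. -/
def Str.GuardedTuple (A : Str) {k : ℕ} (t : Fin k → A.Dom) : Prop :=
  ∃ G, A.GuardedSet G ∧ Set.range t ⊆ G

/-- `a⃗ ↦ b⃗` is a partial Σ-isomorphism. -/
def PartialIso (sg : Set (ℕ × ℕ)) (A B : Str) {k : ℕ}
    (a : Fin k → A.Dom) (b : Fin k → B.Dom) : Prop :=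
  (∀ i j, a i = a j ↔ b i = b j) ∧
  ∀ m R, (m, R) ∈ sg → ∀ f : Fin m → Fin k, (A.rel m R (a ∘ f) ↔ B.rel m R (b ∘ f))

/-- A pair of equally long tuples in two structures. -/
structure GPair (A B : Str) : Type where
  k : ℕ
  a : Fin k → A.Dom
  b : Fin k → B.Dom

/-- Forth condition; if `conn = true` it is only required for guarded tuples
overlapping the current one (connected guarded bisimulations). -/
def StepForth (conn : Bool) (A B : Str) (I : Set (GPair A B)) (p : GPair A B) : Prop :=
  ∀ (k' : ℕ) (a' : Fin k' → A.Dom), A.GuardedTuple a' →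
    (conn → (Set.range a' ∩ Set.range p.a).Nonempty) →
    ∃ b' : Fin k' → B.Dom, GPair.mk k' a' b' ∈ I ∧ ∀ i j, p.a i = a' j → p.b i = b' j

/-- Back condition. -/
def StepBack (conn : Bool) (A B : Str) (I : Set (GPair A B)) (p : GPair A B) : Prop :=
  ∀ (k' : ℕ) (b' : Fin k' → B.Dom), B.GuardedTuple b' →
    (conn → (Set.range b' ∩ Set.range p.b).Nonempty) →
    ∃ a' : Fin k' → A.Dom, GPair.mk k' a' b' ∈ I ∧ ∀ i j, p.b i = b' j → p.a i = a' j

/-- `I` is a (connected, if `conn`) guarded Σ-bisimulation between `A` and `B`. -/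
def IsGBisim (conn : Bool) (sg : Set (ℕ × ℕ)) (A B : Str) (I : Set (GPair A B)) : Prop :=
  ∀ p ∈ I, A.GuardedTuple p.a ∧ B.GuardedTuple p.b ∧ PartialIso sg A B p.a p.b ∧
    StepForth conn A B I p ∧ StepBack conn A B I p

/-- `A,a⃗ ∼_{GF,Σ} B,b⃗` (`conn = false`) resp. `A,a⃗ ∼_{openGF,Σ} B,b⃗` (`conn = true`). -/
def GBisimilar (conn : Bool) (sg : Set (ℕ × ℕ)) (A : Str) {n : ℕ} (a : Fin n → A.Dom)
    (B : Str) (b : Fin n → B.Dom) : Prop :=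
  ∃ I : Set (GPair A B), IsGBisim conn sg A B I ∧ PartialIso sg A B a b ∧
    StepForth conn A B I ⟨n, a, b⟩ ∧ StepBack conn A B I ⟨n, a, b⟩

/-- A sequence `I_ℓ, …, I₀` witnessing (connected) guarded Σ `ℓ`-bisimilarity. -/
def IsGBisimSeq (conn : Bool) (sg : Set (ℕ × ℕ)) (A B : Str)
    (Is : ℕ → Set (GPair A B)) (ℓ : ℕ) : Prop :=
  (∀ i, i < ℓ → ∀ p ∈ Is i, A.GuardedTuple p.a ∧ B.GuardedTuple p.b) ∧
  (∀ i, i ≤ ℓ → ∀ p ∈ Is i, PartialIso sg A B p.a p.b) ∧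
  ∀ i, i < ℓ → ∀ p ∈ Is (i + 1), StepForth conn A B (Is i) p ∧ StepBack conn A B (Is i) p

/-- `A,a⃗ ∼^ℓ_{GF,Σ} B,b⃗` (`conn = false`) resp. `A,a⃗ ∼^ℓ_{openGF,Σ} B,b⃗` (`conn = true`). -/
def GLBisimilar (conn : Bool) (sg : Set (ℕ × ℕ)) (A : Str) {n : ℕ} (a : Fin n → A.Dom)
    (B : Str) (b : Fin n → B.Dom) (ℓ : ℕ) : Prop :=
  ∃ Is : ℕ → Set (GPair A B), IsGBisimSeq conn sg A B Is ℓ ∧ GPair.mk n a b ∈ Is ℓ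

/-! ## Guarded Σ ℓ-embeddings -/

/-- A pair of tuples: constants of a database and elements of a structure. -/
structure EPair (A : Str) : Type where
  k : ℕ
  c : Fin k → ℕ
  f : Fin k → A.Dom

/-- `p` is a partial embedding (injective partial homomorphism) from `D` into `A`. -/
def IsPartialEmbed (D : Database) (A : Str) (p : EPair A) : Prop :=
  (∀ i j, p.c i = p.c j ↔ p.f i = p.f j) ∧
  (∀ i, p.c i ∈ D.consts) ∧
  ∀ a ∈ D.atoms, ∀ g : Fin a.arity → Fin p.k, a.args = p.c ∘ g →
    A.rel a.arity a.rel (p.f ∘ g)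

/-- Guarded sets of a database. -/
def Database.GuardedSet (D : Database) (G : Set ℕ) : Prop :=
  (∃ c ∈ D.consts, G = {c}) ∨ ∃ a ∈ D.atoms, G = Set.range a.args

/-- `e` is a homomorphism from `D` onto `D'`. -/
def DbHomOnto (e : ℕ → ℕ) (D D' : Database) : Prop :=
  (∀ a ∈ D.atoms, a.mapC e ∈ D'.atoms) ∧ ∀ a' ∈ D'.atoms, ∃ a ∈ D.atoms, a.mapC e = a'

/-- `D,t⃗ ≼^ℓ_{openGF,Σ} A,b⃗`: there is a guarded Σ `ℓ`-embedding `(e, H)`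
between the pointed database `(D, t⃗)` and the pointed structure `(A, b⃗)`. -/
def GLEmbed (sg : Set (ℕ × ℕ)) (D : Database) {n : ℕ} (t : Fin n → ℕ)
    (A : Str) (b : Fin n → A.Dom) (ℓ : ℕ) : Prop :=
  ∃ (D' : Database) (e : ℕ → ℕ) (H : Set (EPair A)),
    DbHomOnto e D D' ∧
    (∀ p ∈ H, IsPartialEmbed D' A p) ∧
    EPair.mk n (e ∘ t) b ∈ H ∧
    (∀ G : Set ℕ, D'.GuardedSet G → ∃ p ∈ H, Set.range p.c = G) ∧
    ∀ p₁ ∈ H, ∀ p₂ ∈ H,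
      ∃ (m : ℕ) (j₁ : Fin m → Fin p₁.k) (j₂ : Fin m → Fin p₂.k),
        p₁.c ∘ j₁ = p₂.c ∘ j₂ ∧
        Set.range (p₁.c ∘ j₁) = Set.range p₁.c ∩ Set.range p₂.c ∧
        PartialIso sg A A (p₁.f ∘ j₁) (p₂.f ∘ j₂) ∧
        ∀ (k' : ℕ) (g : Fin k' → Fin m),
          Set.range (p₁.f ∘ j₁ ∘ g) = Set.range (p₁.f ∘ j₁) →
          GLBisimilar true sg A (p₁.f ∘ j₁ ∘ g) A (p₂.f ∘ j₂ ∘ g) ℓ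

/-! ## Gaifman graph of a structure -/

/-- Adjacency in the Gaifman graph of a structure. -/
def Str.Adj (A : Str) (d e : A.Dom) : Prop :=
  ∃ k R, ∃ t : Fin k → A.Dom, A.rel k R t ∧ d ∈ Set.range t ∧ e ∈ Set.range t

/-- `WithinDist A m d e`: `e` is at distance at most `m` from `d` in the
Gaifman graph of `A`. -/
def WithinDist (A : Str) : ℕ → A.Dom → A.Dom → Prop
  | 0, d, e => d = e
  | m + 1, d, e => d = e ∨ ∃ c, A.Adj d c ∧ WithinDist A m c e

/-! ## K-types for GF-KBs -/

/-- `cl(K)` for a GF-KB: the formulas of the ontology, equalities between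
distinct variables, and for every `R ∈ sig(K)` of arity `k` the formulas
`R(x⃗_k)`, `∃y⃗₁(R(x⃗_k) ∧ ¬ x_u = x_w)` and `∃y⃗₂ R(x⃗_k)` (`[y⃗₂] ⊆ [x⃗_k]∖{x_u,x_w}`),
closed under subformulas and single negation. -/
def KB.clGFbase (K : KB) : Set Fml :=
  K.onto ∪
  {φ | ∃ x y : ℕ, x ≠ y ∧ φ = Fml.eq x y} ∪
  {φ | ∃ k R, (k, R) ∈ K.sig ∧
    (φ = baseAtom k R ∨
     (∃ u w : ℕ, u < k ∧ w < k ∧ u ≠ w ∧ φ = connFml k R u w) ∨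
     ∃ u w : ℕ, u < k ∧ w < k ∧ u ≠ w ∧
       ∃ ys : List ℕ, (∀ z ∈ ys, z < k ∧ z ≠ u ∧ z ≠ w) ∧ φ = exList ys (baseAtom k R))}

def KB.clGF (K : KB) : Set Fml :=
  (⋃ φ ∈ K.clGFbase, φ.subfmls) ∪ Fml.neg '' (⋃ φ ∈ K.clGFbase, φ.subfmls)

/-- `tp_K(A, b⃗)`: the `K`-type of the tuple `b⃗` in `A`, represented as the set
of pairs `(φ, σ)` with `φ ∈ cl(K)` and `σ` a substitution of the variables of
`φ` by positions of `b⃗` making `φ` true at `b⃗`. -/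
def KB.tpGF (K : KB) (A : Str) {m : ℕ} (b : Fin m → A.Dom) : Set (Fml × (ℕ → Fin m)) :=
  {p | p.1 ∈ K.clGF ∧ p.1.Sat A fun x => b (p.2 x)}

/-- `Φ` is a `K`-type (of tuples of length `m`). -/
def KB.IsGFTypeAt (K : KB) {m : ℕ} (Φ : Set (Fml × (ℕ → Fin m))) : Prop :=
  ∃ A : Str, A.IsModel K ∧ ∃ b : Fin m → A.Dom, K.tpGF A b = Φ

/-- `Φ` is realizable in `K, t⃗`. -/
def KB.GFRealizableAt (K : KB) {m : ℕ} (t : Fin m → ℕ) (Φ : Set (Fml × (ℕ → Fin m))) : Prop :=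
  ∃ A : Str, A.IsModel K ∧ K.tpGF A (fun i => A.const (t i)) = Φ

/-- The tuple `w⃗` satisfies all (substituted) formulas of `Φ` in `A`. -/
def TypeSat (A : Str) {m : ℕ} (w : Fin m → A.Dom) (Φ : Set (Fml × (ℕ → Fin m))) : Prop :=
  ∀ p ∈ Φ, p.1.Sat A fun x => w (p.2 x)

/-- A `K`-type `Φ(x⃗)` is connected: it contains a formula `∃y⃗₁(R(x⃗) ∧ x_u ≠ x_w)`. -/
def GFTypeConnected {m : ℕ} (Φ : Set (Fml × (ℕ → Fin m))) : Prop :=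
  ∃ k R u w, ∃ σ : ℕ → Fin m, u < k ∧ w < k ∧ u ≠ w ∧ (connFml k R u w, σ) ∈ Φ

/-- A `K`-type `Φ(x⃗)` is guarded: it contains the atom `R(x⃗)` (on the full tuple). -/
def GFTypeGuarded {m : ℕ} (Φ : Set (Fml × (ℕ → Fin m))) : Prop :=
  ∃ R, ∃ σ : ℕ → Fin m, (∀ i : Fin m, σ i.1 = i) ∧ (baseAtom m R, σ) ∈ Φ

/-- A `K`-type is non-unary: it contains `¬ (x = y)` for (substituted-)distinct variables. -/
def GFTypeNonUnary {m : ℕ} (Φ : Set (Fml × (ℕ → Fin m))) : Prop :=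
  ∃ x y, ∃ σ : ℕ → Fin m, σ x ≠ σ y ∧ (Fml.neg (.eq x y), σ) ∈ Φ

/-- The restriction of a type `Φ(x⃗)` to the single variable `x_j`. -/
def GFRestrict1 {m : ℕ} (Φ : Set (Fml × (ℕ → Fin m))) (j : Fin m) :
    Set (Fml × (ℕ → Fin 1)) :=
  {q | ∃ σ : ℕ → Fin m, (q.1, σ) ∈ Φ ∧ ∀ x ∈ q.1.free, σ x = j}

/-- A `K`-type is openGF-complete: any two pointed models of `K` realizing it
are connected guarded `sig(K)`-bisimilar. -/
def KB.OpenGFComplete (K : KB) {m : ℕ} (Φ : Set (Fml × (ℕ → Fin m))) : Prop :=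
  ∀ A B : Str, A.IsModel K → B.IsModel K → ∀ (a : Fin m → A.Dom) (b : Fin m → B.Dom),
    K.tpGF A a = Φ → K.tpGF B b = Φ → GBisimilar true K.sig A a B b

/-! ## K-types with explicit variable tuples, and witness sequences -/

/-- A `K`-type together with an explicit tuple of distinct variables. -/
structure GFTypeV : Type where
  m : ℕ
  xs : Fin m → ℕ
  xs_inj : Function.Injective xs
  Phi : Set (Fml × (ℕ → Fin m))

/-- The type `T` is satisfied under the assignment `μ` of its variables. -/
def GFTypeV.SatUnder (T : GFTypeV) (A : Str) (μ : ℕ → A.Dom) : Prop :=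
  ∀ p ∈ T.Phi, p.1.Sat A fun x => μ (T.xs (p.2 x))

/-- `T` is a `K`-type. -/
def GFTypeV.IsTypeOf (T : GFTypeV) (K : KB) : Prop := K.IsGFTypeAt T.Phi

/-- Two types (with explicit variables) are coherent: some model of `K`
satisfies their union under a common assignment. -/
def GFCoherent (K : KB) (T₁ T₂ : GFTypeV) : Prop :=
  ∃ A : Str, A.IsModel K ∧ ∃ μ : ℕ → A.Dom, T₁.SatUnder A μ ∧ T₂.SatUnder A μ

/-- The sequence `Φ₀(x⃗₀),…,Φ_{n+1}(x⃗_{n+1})` witnesses openGF-incompleteness of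
the `K`-type `Φ(x)` with one free variable. -/
def GFWitSeq (K : KB) (Φ : Set (Fml × (ℕ → Fin 1))) (n : ℕ)
    (Ts : Fin (n + 2) → GFTypeV) : Prop :=
  (∃ j : Fin (Ts 0).m, GFRestrict1 (Ts 0).Phi j = Φ) ∧
  (∀ i : Fin (n + 2), (Ts i).IsTypeOf K ∧ GFTypeGuarded (Ts i).Phi ∧ GFTypeNonUnary (Ts i).Phi) ∧
  (∀ i : Fin (n + 1),
    (Set.range (Ts i.castSucc).xs ∩ Set.range (Ts i.succ).xs).Nonempty) ∧
  (∀ i : Fin (n + 1), GFCoherent K (Ts i.castSucc) (Ts i.succ)) ∧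
  ∃ A : Str, A.IsModel K ∧ ∃ μ : ℕ → A.Dom,
    (Ts ⟨n, by omega⟩).SatUnder A μ ∧
    ¬ ∃ μ' : ℕ → A.Dom,
        (∀ x, x ∈ Set.range (Ts ⟨n, by omega⟩).xs → x ∈ Set.range (Ts ⟨n + 1, by omega⟩).xs →
          μ' x = μ x) ∧
        (Ts ⟨n + 1, by omega⟩).SatUnder A μ'

/-! ## Relativization and finite controllability -/

/-- `L` has the relativization property. -/
def RelativizationProperty (L : Set Fml) : Prop :=
  ∀ φ ∈ L, φ.free = ∅ → ∀ c : ℕ, ((1 : ℕ), c) ∉ φ.sig →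
    ∃ φ' ∈ L, φ'.free = ∅ ∧ ∀ (B : Str) (v : ℕ → B.Dom),
      (φ'.Sat B v ↔ φ.SatIn B {d | B.rel 1 c ![d]} v)

/-- Evaluating queries from `Q` is finitely controllable on `L`-KBs. -/
def FinitelyControllable (Q L : Set Fml) : Prop :=
  ∀ K : KB, (∀ φ ∈ K.onto, φ ∈ L) → (∀ φ ∈ K.onto, φ.free = ∅) →
  ∀ (n : ℕ) (q : Fml), q ∈ Q → (∀ m ∈ q.free, m < n) →
  ∀ c : Fin n → ℕ,
  (∃ A : Str, A.IsModel K ∧ ∃ v : ℕ → A.Dom,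
      (∀ i : Fin n, v i.1 = A.const (c i)) ∧ ¬ q.Sat A v) →
  ∃ A : Str, Finite A.Dom ∧ A.IsModel K ∧ ∃ v : ℕ → A.Dom,
      (∀ i : Fin n, v i.1 = A.const (c i)) ∧ ¬ q.Sat A v

/-!
(⇒) Let `C` separate and let `A₀` be a model of `K` with `b ∉ C`. Unravel `A₀` from the
constants into a forest model whose children are indexed by the finitely many existential
subconcepts of `K` and `C`; the unraveling agrees with `A₀` on these concepts, so `b ∉ C` there
too. A model `B` with `B, a ∼ A, b` would transfer `C` from `a` to `b`.

(⇐) Since `A` has finite outdegree, `m`-bisimilarity to `A, b` over `sig(K)` is expressed by a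
concept `charConcept m b`. If for some `a ∈ P` every level `m` were realized by a model of `K`,
an ultraproduct of these models would be a model of `K` fully bisimilar to `A, b`. So one level
`N` fails for all the finitely many `a ∈ P`, and `¬ charConcept N b` separates.
-/

instance Str.instNonemptyDom (A : Str) : Nonempty A.Dom := A.dom_nonempty

lemma Str.rel_one_comp {α : Type*} (B : Str) (f : α → B.Dom) (c : ℕ) (d : α) :
    B.rel 1 c (fun i => f (![d] i)) ↔ B.rel 1 c ![f d] := by
  rw [show (fun i => f (![d] i)) = ![f d] from by ext i; fin_cases i; rfl]

lemma Str.rel_two_comp {α : Type*} (B : Str) (f : α → B.Dom) (R : ℕ) (d e : α) :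
    B.rel 2 R (fun i => f (![d, e] i)) ↔ B.rel 2 R ![f d, f e] := by
  rw [show (fun i => f (![d, e] i)) = ![f d, f e] from by ext i; fin_cases i <;> rfl]

lemma mem_interp_inter {A : Str} {d : A.Dom} {C D : Concept} :
    d ∈ (Concept.inter C D).interp A ↔ d ∈ C.interp A ∧ d ∈ D.interp A := Iff.rfl

lemma mem_interp_exRole {A : Str} {d : A.Dom} {i : Bool} {R : ℕ} {C : Concept} :
    d ∈ (Concept.exRole i R C).interp A ↔ ∃ e ∈ C.interp A, roleHolds A (i, R) d e := Iff.rfl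

lemma roleHolds.roleEdge {A : Str} {ρ : Bool × ℕ} {d e : A.Dom} (h : roleHolds A ρ d e) :
    A.RoleEdge d e := by
  rcases ρ with ⟨_ | _, R⟩
  exacts [⟨R, Or.inl h⟩, ⟨R, Or.inr h⟩]

lemma Concept.sat_toFml_iff (A : Str) (C : Concept) {x : ℕ} (hx : x = 0 ∨ x = 1)
    (v : ℕ → A.Dom) : (C.toFml x).Sat A v ↔ v x ∈ C.interp A := by
  induction C generalizing x v with
  | top => simp [Concept.toFml, Concept.interp, Fml.Sat]
  | atom c => exact A.rel_one_comp v c x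
  | neg C ih => exact not_congr (ih hx v)
  | inter C D ihC ihD => exact and_congr (ihC hx v) (ihD hx v)
  | exRole inv R C ih =>
    have hy : 1 - x = 0 ∨ 1 - x = 1 := by omega
    have hxy : x ≠ 1 - x := by omega
    refine exists_congr fun e => ?_
    cases inv <;>
    · simp only [Fml.Sat, Bool.false_eq_true, if_true, if_false,
        A.rel_two_comp, ih hy, Function.update_self, Function.update_of_ne hxy]
      exact and_comm

lemma sat_CIfml_iff (A : Str) (p : Concept × Concept) (v : ℕ → A.Dom) :
    (CIfml p).Sat A v ↔ p.1.interp A ⊆ p.2.interp A := by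
  simp only [CIfml, Fml.imp, Fml.Sat, Concept.sat_toFml_iff A _ (Or.inl rfl),
    Function.update_self, ← imp_iff_not_or]
  exact ⟨fun h d => h (Classical.arbitrary _) d, fun h _ d => @h d⟩

lemma isModel_toKB_iff (A : Str) (K : ALCIKB) :
    A.IsModel K.toKB ↔
      (∀ p ∈ K.onto, p.1.interp A ⊆ p.2.interp A) ∧ ∀ a ∈ K.db.atoms, a.Holds A A.const := by
  simp only [Str.IsModel, ALCIKB.toKB, Set.forall_mem_image, sat_CIfml_iff]
  exact and_congr_left' ⟨fun h p hp => h hp (fun _ => Classical.arbitrary _),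
    fun h p hp _ => h p hp⟩

namespace Concept

lemma subconcepts_finite (C : Concept) : C.subconcepts.Finite := by
  induction C with
  | top | atom _ => exact Set.finite_singleton _
  | neg C ih | exRole _ _ C ih => exact ih.insert _
  | inter C D ihC ihD => exact (ihC.union ihD).insert _

def listInter : List Concept → Concept
  | [] => .top
  | C :: l => .inter C (listInter l)

noncomputable def finInter {α : Type*} (s : Finset α) (f : α → Concept) : Concept :=
  listInter (s.toList.map f)

noncomputable def finUnion {α : Type*} (s : Finset α) (f : α → Concept) : Concept :=
  .neg (finInter s fun x => .neg (f x))

def allRole (ρ : Bool × ℕ) (C : Concept) : Concept :=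
  .neg (.exRole ρ.1 ρ.2 (.neg C))

variable {A : Str} {d : A.Dom}

lemma mem_interp_listInter (l : List Concept) :
    d ∈ (listInter l).interp A ↔ ∀ C ∈ l, d ∈ C.interp A := by
  induction l with
  | nil => simp [listInter, interp]
  | cons C l ih => simp [listInter, interp, ih]

lemma mem_interp_finInter {α : Type*} (s : Finset α) (f : α → Concept) :
    d ∈ (finInter s f).interp A ↔ ∀ x ∈ s, d ∈ (f x).interp A := by
  simp [finInter, mem_interp_listInter]

lemma mem_interp_finUnion {α : Type*} (s : Finset α) (f : α → Concept) :
    d ∈ (finUnion s f).interp A ↔ ∃ x ∈ s, d ∈ (f x).interp A := by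
  simp [finUnion, interp, mem_interp_finInter]

lemma mem_interp_allRole (ρ : Bool × ℕ) (C : Concept) :
    d ∈ (allRole ρ C).interp A ↔ ∀ e, roleHolds A ρ d e → e ∈ C.interp A := by
  simp [allRole, interp, roleHolds, not_imp_not]

lemma csig_listInter_subset {S : Set (ℕ × ℕ)} (l : List Concept) (h : ∀ C ∈ l, C.csig ⊆ S) :
    (listInter l).csig ⊆ S := by
  induction l with
  | nil => simp [listInter, csig]
  | cons C l ih => simp_all [listInter, csig]

lemma csig_finInter_subset {α : Type*} {S : Set (ℕ × ℕ)} (s : Finset α) (f : α → Concept)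
    (h : ∀ x ∈ s, (f x).csig ⊆ S) : (finInter s f).csig ⊆ S :=
  csig_listInter_subset _ (by simpa using h)

lemma csig_finUnion_subset {α : Type*} {S : Set (ℕ × ℕ)} (s : Finset α) (f : α → Concept)
    (h : ∀ x ∈ s, (f x).csig ⊆ S) : (finUnion s f).csig ⊆ S :=
  csig_finInter_subset s _ h

end Concept

lemma Fml.sig_finite (φ : Fml) : φ.sig.Finite := by
  induction φ with
  | eq | rel => simp [Fml.sig]
  | neg _ ih | ex _ _ ih | all _ _ ih => exact ih
  | and _ _ ih ih' | or _ _ ih ih' => exact ih.union ih'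

lemma ALCIKB.sigK_finite (K : ALCIKB) : K.sigK.Finite :=
  (K.toKB.onto_finite.biUnion fun φ _ => φ.sig_finite).union (K.db.finite.image _)

lemma IsALCIBisim.mem_interp_iff {sg : Set (ℕ × ℕ)} {A B : Str} {S : Set (A.Dom × B.Dom)}
    (hS : IsALCIBisim sg A B S) {C : Concept} (hC : C.csig ⊆ sg) {p : A.Dom × B.Dom}
    (hp : p ∈ S) : p.1 ∈ C.interp A ↔ p.2 ∈ C.interp B := by
  induction C generalizing p with
  | top => exact Iff.rfl
  | atom c => exact hS.atom p hp c (hC rfl)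
  | neg C ih => exact not_congr (ih hC hp)
  | inter C D ihC ihD =>
    exact and_congr (ihC (Set.subset_union_left.trans hC) hp)
      (ihD (Set.subset_union_right.trans hC) hp)
  | exRole i R C ih =>
    have hR : ((2 : ℕ), R) ∈ sg := hC (Set.mem_insert _ _)
    have hCs : C.csig ⊆ sg := (Set.subset_insert _ _).trans hC
    simp only [mem_interp_exRole]
    constructor
    · rintro ⟨d', hd', hrole⟩
      obtain ⟨e', hrole', hmem⟩ := hS.forth p hp (i, R) hR d' hrole
      exact ⟨e', (ih hCs hmem).mp hd', hrole'⟩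
    · rintro ⟨e', he', hrole⟩
      obtain ⟨d', hrole', hmem⟩ := hS.back p hp (i, R) hR e' hrole
      exact ⟨d', (ih hCs hmem).mpr he', hrole'⟩

lemma _root_.SimpleGraph.isAcyclic_of_height {V : Type*} (G : SimpleGraph V) (h : V → ℕ)
    (hlow : ∀ u v w, G.Adj u v → G.Adj u w → h v ≤ h u → h w ≤ h u → v = w) : G.IsAcyclic := by
  classical
  intro v c hc
  obtain ⟨u, hu, hmax⟩ := c.support.toFinset.exists_max_image h ⟨v, by simp⟩
  rw [List.mem_toFinset] at hu
  set c' := c.rotate u hu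
  have hc' : c'.IsCycle := hc.rotate hu
  have hle : ∀ x ∈ c'.support, h x ≤ h u := fun x hx =>
    hmax x (List.mem_toFinset.mpr ((c.mem_support_rotate_iff u hu).mp hx))
  exact hc'.snd_ne_penultimate (hlow u _ _ (c'.adj_snd hc'.not_nil)
    (c'.adj_penultimate hc'.not_nil).symm (hle _ (c'.getVert_mem_support _))
    (hle _ (c'.getVert_mem_support _)))

inductive UPath (α : Type) : Type where
  | root : α → UPath α
  | child : UPath α → Bool → ℕ → Concept → UPath α

namespace UPath

variable {α : Type}

def length : UPath α → ℕ
  | root _ => 0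
  | child p _ _ _ => p.length + 1

def origin : UPath α → α
  | root d => d
  | child p _ _ _ => p.origin

lemma child_ne (p : UPath α) (i : Bool) (R : ℕ) (E : Concept) : child p i R E ≠ p :=
  fun h => by simpa [length] using congrArg length h

variable (A₀ : Str)

noncomputable def tip : UPath A₀.Dom → A₀.Dom
  | root d => d
  | child p i R E => Classical.epsilon fun e => e ∈ E.interp A₀ ∧ roleHolds A₀ (i, R) (p.tip) e

variable (K : ALCIKB) (cl : Set Concept)

def IsValid : UPath A₀.Dom → Prop
  | root d => ∃ c ∈ K.db.consts, d = A₀.const c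
  | child p i R E => p.IsValid ∧ Concept.exRole i R E ∈ cl ∧
      p.tip A₀ ∈ (Concept.exRole i R E).interp A₀

variable {A₀ K cl}

lemma IsValid.tip_child {p : UPath A₀.Dom} {i : Bool} {R : ℕ} {E : Concept}
    (h : (child p i R E).IsValid A₀ K cl) :
    (child p i R E).tip A₀ ∈ E.interp A₀ ∧
      roleHolds A₀ (i, R) (p.tip A₀) ((child p i R E).tip A₀) :=
  Classical.epsilon_spec h.2.2

end UPath

section Unraveling

open UPath

variable (K : ALCIKB) (A₀ : Str) (cl : Set Concept)

def unravelEdge (R : ℕ) (p q : UPath A₀.Dom) : Prop :=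
  (∃ x y, (⟨2, R, ![x, y]⟩ : Atom) ∈ K.db.atoms ∧ p = root (A₀.const x) ∧ q = root (A₀.const y)) ∨
  (∃ E, q = child p false R E) ∨ (∃ E, p = child q true R E)

def unravelRel : (k : ℕ) → ℕ → (Fin k → {p : UPath A₀.Dom // p.IsValid A₀ K cl}) → Prop
  | 1, c, t => A₀.rel 1 c ![(t 0).1.tip A₀]
  | 2, R, t => unravelEdge K A₀ R (t 0).1 (t 1).1
  | _, _, _ => False

open Classical in
/-- Constants not occurring in `K` are interpreted as the root of `b`. -/
noncomputable def unravel (b : ℕ) (hb : b ∈ K.db.consts) : Str where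
  Dom := {p : UPath A₀.Dom // p.IsValid A₀ K cl}
  dom_nonempty := ⟨⟨root (A₀.const b), b, hb, rfl⟩⟩
  rel := unravelRel K A₀ cl
  const c := if h : c ∈ K.db.consts then ⟨root (A₀.const c), c, h, rfl⟩
    else ⟨root (A₀.const b), b, hb, rfl⟩

variable {K A₀ cl} {b : ℕ} {hb : b ∈ K.db.consts}

lemma unravel_rel_one {c : ℕ} {p : (unravel K A₀ cl b hb).Dom} :
    (unravel K A₀ cl b hb).rel 1 c ![p] ↔ A₀.rel 1 c ![p.1.tip A₀] := Iff.rfl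

lemma unravel_rel_two {R : ℕ} {p q : (unravel K A₀ cl b hb).Dom} :
    (unravel K A₀ cl b hb).rel 2 R ![p, q] ↔ unravelEdge K A₀ R p.1 q.1 := Iff.rfl

lemma unravel_const_val {c : ℕ} (hc : c ∈ K.db.consts) :
    ((unravel K A₀ cl b hb).const c).1 = root (A₀.const c) := by
  simp [unravel, hc]

lemma exists_unravel_const_val_eq_root (c : ℕ) :
    ∃ d, ((unravel K A₀ cl b hb).const c).1 = root d := by
  by_cases hc : c ∈ K.db.consts
  · exact ⟨_, unravel_const_val hc⟩
  · exact ⟨A₀.const b, by simp [unravel, hc]⟩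

lemma unravelEdge_rel_tip (hA₀ : A₀.IsModel K.toKB) {R : ℕ} {p q : UPath A₀.Dom}
    (hp : p.IsValid A₀ K cl) (hq : q.IsValid A₀ K cl) (h : unravelEdge K A₀ R p q) :
    A₀.rel 2 R ![p.tip A₀, q.tip A₀] := by
  rcases h with ⟨x, y, hat, rfl, rfl⟩ | ⟨E, rfl⟩ | ⟨E, rfl⟩
  · exact (A₀.rel_two_comp A₀.const R x y).mp (hA₀.2 _ hat)
  · exact hq.tip_child.2
  · exact hp.tip_child.2

lemma mem_interp_unravel_iff (hA₀ : A₀.IsModel K.toKB) {E : Concept} (hE : E.subconcepts ⊆ cl)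
    (p : (unravel K A₀ cl b hb).Dom) :
    p ∈ E.interp (unravel K A₀ cl b hb) ↔ p.1.tip A₀ ∈ E.interp A₀ := by
  induction E generalizing p with
  | top | atom _ => exact Iff.rfl
  | neg E ih => exact not_congr (ih ((Set.subset_insert _ _).trans hE) p)
  | inter E F ihE ihF =>
    exact and_congr (ihE ((Set.subset_union_left.trans (Set.subset_insert _ _)).trans hE) p)
      (ihF ((Set.subset_union_right.trans (Set.subset_insert _ _)).trans hE) p)
  | exRole i R E ih =>
    have ih := ih ((Set.subset_insert _ _).trans hE)
    constructor
    · rintro ⟨q, hq, hrole⟩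
      refine ⟨q.1.tip A₀, (ih q).mp hq, ?_⟩
      cases i
      exacts [unravelEdge_rel_tip hA₀ p.2 q.2 hrole, unravelEdge_rel_tip hA₀ q.2 p.2 hrole]
    · intro hp
      have hc : (child p.1 i R E).IsValid A₀ K cl := ⟨p.2, hE (Set.mem_insert _ _), hp⟩
      refine ⟨⟨_, hc⟩, (ih _).mpr hc.tip_child.1, ?_⟩
      cases i
      exacts [Or.inr (Or.inl ⟨E, rfl⟩), Or.inr (Or.inr ⟨E, rfl⟩)]

lemma unravel_isModel (hA₀ : A₀.IsModel K.toKB)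
    (honto : ∀ p ∈ K.onto, p.1.subconcepts ⊆ cl ∧ p.2.subconcepts ⊆ cl) :
    (unravel K A₀ cl b hb).IsModel K.toKB := by
  refine (isModel_toKB_iff _ K).mpr ⟨fun pr hpr x hx => ?_, fun a ha => ?_⟩
  · rw [mem_interp_unravel_iff hA₀ (honto pr hpr).2]
    exact ((isModel_toKB_iff A₀ K).mp hA₀).1 pr hpr
      ((mem_interp_unravel_iff hA₀ (honto pr hpr).1 x).mp hx)
  · have hcons : ∀ i, a.args i ∈ K.db.consts := fun i => Set.mem_biUnion ha ⟨i, rfl⟩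
    have hA₀a := hA₀.2 a ha
    rcases a with ⟨k, r, args⟩
    rcases K.db_arity _ ha with rfl | rfl
    · obtain ⟨x, rfl⟩ : ∃ x, args = ![x] := ⟨args 0, by ext i; fin_cases i; rfl⟩
      have hx : x ∈ K.db.consts := hcons 0
      rw [Atom.Holds, A₀.rel_one_comp] at hA₀a
      simp only [Atom.Holds, Str.rel_one_comp, unravel_rel_one, unravel_const_val hx]
      exact hA₀a
    · obtain ⟨x, y, rfl⟩ : ∃ x y, args = ![x, y] :=
        ⟨args 0, args 1, by ext i; fin_cases i <;> rfl⟩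
      have hx : x ∈ K.db.consts := hcons 0
      have hy : y ∈ K.db.consts := hcons 1
      simp only [Atom.Holds, Str.rel_two_comp, unravel_rel_two, unravel_const_val hx,
        unravel_const_val hy]
      exact Or.inl ⟨x, y, ha, rfl, rfl⟩

lemma unravel_dbEdge_isRoot {p q : (unravel K A₀ cl b hb).Dom}
    (h : (unravel K A₀ cl b hb).DbEdge K p q) : (∃ d, p.1 = root d) ∧ ∃ d, q.1 = root d := by
  obtain ⟨-, x, y, -, rfl, rfl⟩ := h
  exact ⟨exists_unravel_const_val_eq_root x, exists_unravel_const_val_eq_root y⟩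

lemma unravel_roleEdge_cases {p q : (unravel K A₀ cl b hb).Dom}
    (h : (unravel K A₀ cl b hb).RoleEdge p q) :
    (unravel K A₀ cl b hb).DbEdge K p q ∨ (unravel K A₀ cl b hb).DbEdge K q p ∨
      (∃ i R E, q.1 = child p.1 i R E) ∨ (∃ i R E, p.1 = child q.1 i R E) := by
  have dbEdge : ∀ {R x y} {p q : (unravel K A₀ cl b hb).Dom},
      (⟨2, R, ![x, y]⟩ : Atom) ∈ K.db.atoms → p.1 = root (A₀.const x) →
        q.1 = root (A₀.const y) → (unravel K A₀ cl b hb).DbEdge K p q :=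
    fun hat hp hq => ⟨_, _, _, hat,
      Subtype.ext (hp.trans (unravel_const_val (Set.mem_biUnion hat ⟨0, rfl⟩)).symm),
      Subtype.ext (hq.trans (unravel_const_val (Set.mem_biUnion hat ⟨1, rfl⟩)).symm)⟩
  obtain ⟨R, h | h⟩ := h
  · rcases h with ⟨x, y, hat, hp, hq⟩ | ⟨E, hq⟩ | ⟨E, hp⟩
    · exact Or.inl (dbEdge hat hp hq)
    · exact Or.inr (Or.inr (Or.inl ⟨_, _, _, hq⟩))
    · exact Or.inr (Or.inr (Or.inr ⟨_, _, _, hp⟩))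
  · rcases h with ⟨x, y, hat, hq, hp⟩ | ⟨E, hp⟩ | ⟨E, hq⟩
    · exact Or.inr (Or.inl (dbEdge hat hq hp))
    · exact Or.inr (Or.inr (Or.inr ⟨_, _, _, hp⟩))
    · exact Or.inr (Or.inr (Or.inl ⟨_, _, _, hq⟩))

lemma unravel_forestGraph_adj {p q : (unravel K A₀ cl b hb).Dom}
    (h : ((unravel K A₀ cl b hb).forestGraph K).Adj p q) :
    (∃ i R E, q.1 = child p.1 i R E) ∨ (∃ i R E, p.1 = child q.1 i R E) := by
  obtain ⟨-, hedge, hpq, hqp⟩ := h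
  rcases unravel_roleEdge_cases hedge with h | h | h
  exacts [absurd h hpq, absurd h hqp, h]

lemma unravel_forestGraph_isAcyclic : ((unravel K A₀ cl b hb).forestGraph K).IsAcyclic := by
  refine SimpleGraph.isAcyclic_of_height _ (fun p => p.1.length) fun u v w huv huw hv hw => ?_
  have parent : ∀ {v}, ((unravel K A₀ cl b hb).forestGraph K).Adj u v →
      v.1.length ≤ u.1.length → ∃ i R E, u.1 = child v.1 i R E := fun h hle => by
    rcases unravel_forestGraph_adj h with ⟨i, R, E, h⟩ | h
    · simp [h, length] at hle
    · exact h
  obtain ⟨i, R, E, hv⟩ := parent huv hv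
  obtain ⟨i', R', E', hw⟩ := parent huw hw
  exact Subtype.ext (child.inj (hv.symm.trans hw)).1

lemma unravel_forestGraph_reachable_const (p : (unravel K A₀ cl b hb).Dom) :
    ∃ c ∈ K.db.consts, ((unravel K A₀ cl b hb).forestGraph K).Reachable
      ((unravel K A₀ cl b hb).const c) p := by
  obtain ⟨p, hp⟩ := p
  induction p with
  | root d =>
    obtain ⟨c, hc, rfl⟩ := id hp
    have hroot : (unravel K A₀ cl b hb).const c = ⟨_, hp⟩ := Subtype.ext (unravel_const_val hc)
    exact ⟨c, hc, hroot ▸ .refl _⟩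
  | child p i R E ih =>
    obtain ⟨c, hc, hreach⟩ := ih hp.1
    refine ⟨c, hc, hreach.trans (SimpleGraph.Adj.reachable ⟨fun h => ?_, ⟨R, ?_⟩, ?_, ?_⟩)⟩
    · exact child_ne p i R E (congrArg Subtype.val h).symm
    · cases i
      exacts [Or.inl (Or.inr (Or.inl ⟨E, rfl⟩)), Or.inr (Or.inr (Or.inr ⟨E, rfl⟩))]
    · intro h
      obtain ⟨-, d, hd⟩ := unravel_dbEdge_isRoot h
      simp at hd
    · intro h
      obtain ⟨⟨d, hd⟩, -⟩ := unravel_dbEdge_isRoot h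
      simp at hd

lemma unravel_forestGraph_reachable_origin {p q : (unravel K A₀ cl b hb).Dom}
    (h : ((unravel K A₀ cl b hb).forestGraph K).Reachable p q) : p.1.origin = q.1.origin := by
  obtain ⟨w⟩ := h
  induction w with
  | nil => rfl
  | cons hadj _ ih =>
    rw [← ih]
    rcases unravel_forestGraph_adj hadj with ⟨_, _, _, h⟩ | ⟨_, _, _, h⟩ <;> simp [h, origin]

lemma unravel_isForestModel (hA₀ : A₀.IsModel K.toKB)
    (honto : ∀ p ∈ K.onto, p.1.subconcepts ⊆ cl ∧ p.2.subconcepts ⊆ cl) :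
    (unravel K A₀ cl b hb).IsForestModel K := by
  refine ⟨unravel_isModel hA₀ honto, fun k R t h => ?_, fun p h => ?_,
    unravel_forestGraph_isAcyclic, unravel_forestGraph_reachable_const, ?_⟩
  · rcases k with _ | _ | _ | k
    exacts [h.elim, Or.inl rfl, Or.inr rfl, h.elim]
  · rcases unravel_roleEdge_cases h with h | h | ⟨i, R, E, h⟩ | ⟨i, R, E, h⟩
    exacts [h, h, absurd h.symm (child_ne _ _ _ _), absurd h.symm (child_ne _ _ _ _)]
  · intro c hc c' hc' hne hreach
    have h := unravel_forestGraph_reachable_origin hreach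
    simp only [unravel_const_val hc, unravel_const_val hc', origin] at h
    exact hne (Subtype.ext (by rw [unravel_const_val hc, unravel_const_val hc', h]))

lemma unravel_finiteOutdegree (hcl : cl.Finite) : (unravel K A₀ cl b hb).FiniteOutdegree := by
  intro p
  have hchildren : ∀ D ∈ cl, {q : (unravel K A₀ cl b hb).Dom |
      ∃ i R E, D = .exRole i R E ∧ q.1 = child p.1 i R E}.Finite := fun D _ =>
    Set.Subsingleton.finite fun q ⟨i, R, E, hD, hq⟩ q' ⟨i', R', E', hD', hq'⟩ => by
      rw [hD] at hD'
      injection hD' with hi hR hE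
      exact Subtype.ext (by rw [hq, hq', hi, hR, hE])
  have hparent : {q : (unravel K A₀ cl b hb).Dom | ∃ i R E, p.1 = child q.1 i R E}.Finite :=
    Set.Subsingleton.finite fun q ⟨i, R, E, hq⟩ q' ⟨i', R', E', hq'⟩ =>
      Subtype.ext (child.inj (hq.symm.trans hq')).1
  refine (((K.db.consts_finite.image (unravel K A₀ cl b hb).const).union
    (hcl.biUnion hchildren)).union hparent).subset fun q hq => ?_
  rcases unravel_roleEdge_cases hq with ⟨R, x, y, hat, -, rfl⟩ | ⟨R, x, y, hat, rfl, -⟩ |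
    ⟨i, R, E, h⟩ | h
  · exact Or.inl (Or.inl ⟨y, Set.mem_biUnion hat ⟨1, rfl⟩, rfl⟩)
  · exact Or.inl (Or.inl ⟨x, Set.mem_biUnion hat ⟨0, rfl⟩, rfl⟩)
  · have hq := q.2
    rw [h] at hq
    exact Or.inl (Or.inr (Set.mem_biUnion hq.2.1 ⟨i, R, E, rfl, h⟩))
  · exact Or.inr h

end Unraveling

theorem exists_forestModel_of_cSeparable {K : ALCIKB} {P : Set ℕ} {b : ℕ}
    (hb : b ∈ K.db.consts) (h : K.CSeparable P {b}) :
    ∃ A : Str, A.IsForestModel K ∧ A.FiniteOutdegree ∧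
      ∀ a ∈ P, ¬ ∃ B : Str, B.IsModel K.toKB ∧
        ALCIBisimilar K.sigK B (B.const a) A (A.const b) := by
  obtain ⟨C, hsig, hpos, hneg⟩ := h
  obtain ⟨A₀, hA₀, hbC⟩ : ∃ A₀ : Str, A₀.IsModel K.toKB ∧ A₀.const b ∉ C.interp A₀ := by
    simpa using hneg b rfl
  let cl := (⋃ p ∈ K.onto, p.1.subconcepts ∪ p.2.subconcepts) ∪ C.subconcepts
  have hcl : cl.Finite := (K.onto_finite.biUnion fun p _ =>
    p.1.subconcepts_finite.union p.2.subconcepts_finite).union C.subconcepts_finite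
  have honto : ∀ p ∈ K.onto, p.1.subconcepts ⊆ cl ∧ p.2.subconcepts ⊆ cl := fun p hp =>
    ⟨fun _ hE => Or.inl (Set.mem_biUnion hp (Or.inl hE)),
      fun _ hE => Or.inl (Set.mem_biUnion hp (Or.inr hE))⟩
  refine ⟨unravel K A₀ cl b hb, unravel_isForestModel hA₀ honto, unravel_finiteOutdegree hcl, ?_⟩
  rintro a ha ⟨B, hB, S, hS, hab⟩
  have hC := (hS.mem_interp_iff hsig hab).mp (hpos a ha B hB)
  rw [mem_interp_unravel_iff hA₀ Set.subset_union_right, unravel_const_val hb] at hC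
  exact hbC hC

section LevelBisim

variable (sg : Set (ℕ × ℕ))

def AtomsAgree (B : Str) (e : B.Dom) (A : Str) (d : A.Dom) : Prop :=
  ∀ c, ((1 : ℕ), c) ∈ sg → (B.rel 1 c ![e] ↔ A.rel 1 c ![d])

def LevelBisim (B A : Str) : ℕ → B.Dom → A.Dom → Prop
  | 0, e, d => AtomsAgree sg B e A d
  | m + 1, e, d => AtomsAgree sg B e A d ∧
      (∀ ρ : Bool × ℕ, ((2 : ℕ), ρ.2) ∈ sg → ∀ e', roleHolds B ρ e e' →
        ∃ d', roleHolds A ρ d d' ∧ LevelBisim B A m e' d') ∧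
      (∀ ρ : Bool × ℕ, ((2 : ℕ), ρ.2) ∈ sg → ∀ d', roleHolds A ρ d d' →
        ∃ e', roleHolds B ρ e e' ∧ LevelBisim B A m e' d')

variable {sg} {B A : Str}

lemma LevelBisim.atomsAgree : ∀ {m : ℕ} {e : B.Dom} {d : A.Dom},
    LevelBisim sg B A m e d → AtomsAgree sg B e A d
  | 0, _, _, h => h
  | _ + 1, _, _, h => h.1

lemma LevelBisim.of_succ : ∀ {m : ℕ} {e : B.Dom} {d : A.Dom},
    LevelBisim sg B A (m + 1) e d → LevelBisim sg B A m e d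
  | 0, _, _, h => h.1
  | _ + 1, _, _, ⟨h0, hforth, hback⟩ =>
    ⟨h0, fun ρ hρ e' he' => (hforth ρ hρ e' he').imp fun _ h => ⟨h.1, h.2.of_succ⟩,
      fun ρ hρ d' hd' => (hback ρ hρ d' hd').imp fun _ h => ⟨h.1, h.2.of_succ⟩⟩

lemma LevelBisim.mono {m n : ℕ} (hmn : m ≤ n) {e : B.Dom} {d : A.Dom}
    (h : LevelBisim sg B A n e d) : LevelBisim sg B A m e d := by
  induction hmn with
  | refl => exact h
  | step _ ih => exact ih h.of_succ

lemma LevelBisim.refl (sg : Set (ℕ × ℕ)) (A : Str) : ∀ (m : ℕ) (d : A.Dom), LevelBisim sg A A m d d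
  | 0, _ => fun _ _ => Iff.rfl
  | m + 1, _ => ⟨fun _ _ => Iff.rfl, fun _ _ e' he' => ⟨e', he', refl sg A m e'⟩,
      fun _ _ d' hd' => ⟨d', hd', refl sg A m d'⟩⟩

end LevelBisim

section CharConcept

variable {sg : Set (ℕ × ℕ)} (hsg : sg.Finite) {A : Str} (hA : A.FiniteOutdegree)

noncomputable def unaryNames : Finset ℕ :=
  (hsg.preimage (Prod.mk_right_injective 1).injOn).toFinset

noncomputable def roleNames : Finset (Bool × ℕ) :=
  (Set.finite_univ.prod (hsg.preimage (Prod.mk_right_injective 2).injOn)).toFinset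

noncomputable def successors (ρ : Bool × ℕ) (d : A.Dom) : Finset A.Dom :=
  ((hA d).subset (t := {e | roleHolds A ρ d e}) fun _ he => roleHolds.roleEdge he).toFinset

omit hA in
@[simp] lemma mem_unaryNames {c : ℕ} : c ∈ unaryNames hsg ↔ ((1 : ℕ), c) ∈ sg := by
  simp [unaryNames]

@[simp] lemma mem_roleNames {ρ : Bool × ℕ} : ρ ∈ roleNames hsg ↔ ((2 : ℕ), ρ.2) ∈ sg := by
  simp [roleNames]

@[simp] lemma mem_successors {ρ : Bool × ℕ} {d e : A.Dom} :
    e ∈ successors hA ρ d ↔ roleHolds A ρ d e := by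
  simp [successors]

open Classical in
variable (sg A) in
noncomputable def atomsChar (d : A.Dom) : Concept :=
  Concept.finInter (unaryNames hsg) fun c =>
    if A.rel 1 c ![d] then .atom c else .neg (.atom c)

noncomputable def charConcept : ℕ → A.Dom → Concept
  | 0, d => atomsChar sg hsg A d
  | m + 1, d => .inter (atomsChar sg hsg A d) (Concept.finInter (roleNames hsg) fun ρ => .inter
      (Concept.finInter (successors hA ρ d) fun d' => .exRole ρ.1 ρ.2 (charConcept m d'))
      (Concept.allRole ρ (Concept.finUnion (successors hA ρ d) (charConcept m))))

omit hA in
lemma mem_interp_atomsChar {B : Str} {e : B.Dom} {d : A.Dom} :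
    e ∈ (atomsChar sg hsg A d).interp B ↔ AtomsAgree sg B e A d := by
  simp only [atomsChar, Concept.mem_interp_finInter, mem_unaryNames, AtomsAgree]
  refine forall₂_congr fun c _ => ?_
  split_ifs with h <;> simp [Concept.interp, h]

lemma mem_interp_charConcept {B : Str} (m : ℕ) (d : A.Dom) (e : B.Dom) :
    e ∈ (charConcept hsg hA m d).interp B ↔ LevelBisim sg B A m e d := by
  induction m generalizing d e with
  | zero => exact mem_interp_atomsChar hsg
  | succ m ih =>
    simp only [charConcept, LevelBisim, mem_interp_inter, mem_interp_atomsChar,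
      Concept.mem_interp_finInter, Concept.mem_interp_allRole, Concept.mem_interp_finUnion,
      mem_interp_exRole, mem_roleNames, mem_successors, ih, imp_and, forall_and, Prod.mk.eta]
    exact and_congr_right' (and_comm.trans (and_congr_right' (by simp only [and_comm])))

lemma csig_charConcept (m : ℕ) (d : A.Dom) : (charConcept hsg hA m d).csig ⊆ sg := by
  have hatoms : ∀ d : A.Dom, (atomsChar sg hsg A d).csig ⊆ sg := fun d =>
    Concept.csig_finInter_subset _ _ fun c hc => by
      split_ifs <;> simpa [Concept.csig] using hc
  induction m generalizing d with
  | zero => exact hatoms d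
  | succ m ih =>
    refine Set.union_subset (hatoms d) (Concept.csig_finInter_subset _ _ fun ρ hρ => ?_)
    rw [mem_roleNames] at hρ
    exact Set.union_subset
      (Concept.csig_finInter_subset _ _ fun d' _ => Set.insert_subset hρ (ih d'))
      (Set.insert_subset hρ (Concept.csig_finUnion_subset _ _ fun d' _ => ih d'))

end CharConcept

section Ultraproduct

open Filter

variable (Bf : ℕ → Str)

noncomputable def ultraproduct : Str where
  Dom := (hyperfilter ℕ : Filter ℕ).Product fun n => (Bf n).Dom
  dom_nonempty := ⟨Quotient.mk _ fun _ => Classical.arbitrary _⟩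
  rel k R t := ∀ᶠ n in hyperfilter ℕ, (Bf n).rel k R fun i => (t i).out n
  const c := Quotient.mk _ fun n => (Bf n).const c

variable {Bf}

noncomputable def ultraproduct.mk (x : ∀ n, (Bf n).Dom) : (ultraproduct Bf).Dom := Quotient.mk _ x

lemma ultraproduct.out_mk (x : ∀ n, (Bf n).Dom) :
    ∀ᶠ n in hyperfilter ℕ, (ultraproduct.mk x).out n = x n :=
  Quotient.exact (Quotient.out_eq (ultraproduct.mk x))

lemma ultraproduct_rel_one {c : ℕ} {u : (ultraproduct Bf).Dom} :
    (ultraproduct Bf).rel 1 c ![u] ↔ ∀ᶠ n in hyperfilter ℕ, (Bf n).rel 1 c ![u.out n] :=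
  eventually_congr (.of_forall fun n => (Bf n).rel_one_comp (fun v => v.out n) c u)

lemma roleHolds_ultraproduct {ρ : Bool × ℕ} {u v : (ultraproduct Bf).Dom} :
    roleHolds (ultraproduct Bf) ρ u v ↔
      ∀ᶠ n in hyperfilter ℕ, roleHolds (Bf n) ρ (u.out n) (v.out n) := by
  rcases ρ with ⟨_ | _, R⟩
  · exact eventually_congr (.of_forall fun n => (Bf n).rel_two_comp (fun w => w.out n) R u v)
  · exact eventually_congr (.of_forall fun n => (Bf n).rel_two_comp (fun w => w.out n) R v u)

lemma mem_interp_ultraproduct (C : Concept) (u : (ultraproduct Bf).Dom) :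
    u ∈ C.interp (ultraproduct Bf) ↔ ∀ᶠ n in hyperfilter ℕ, u.out n ∈ C.interp (Bf n) := by
  induction C generalizing u with
  | top => exact iff_of_true trivial (.of_forall fun _ => trivial)
  | atom c => exact ultraproduct_rel_one
  | neg C ih => exact (not_congr (ih u)).trans Ultrafilter.eventually_not.symm
  | inter C D ihC ihD => exact (and_congr (ihC u) (ihD u)).trans eventually_and.symm
  | exRole i R C ih =>
    simp only [mem_interp_exRole]
    constructor
    · rintro ⟨v, hv, hrole⟩
      exact ((ih v).mp hv).and (roleHolds_ultraproduct.mp hrole) |>.mono fun n hn => ⟨_, hn⟩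
    · intro h
      let y n := Classical.epsilon fun w =>
        w ∈ C.interp (Bf n) ∧ roleHolds (Bf n) (i, R) (u.out n) w
      have hy : ∀ᶠ n in hyperfilter ℕ, (ultraproduct.mk y).out n ∈ C.interp (Bf n) ∧
          roleHolds (Bf n) (i, R) (u.out n) ((ultraproduct.mk y).out n) :=
        (h.and (ultraproduct.out_mk y)).mono fun n hn => hn.2 ▸ Classical.epsilon_spec hn.1
      exact ⟨_, (ih _).mpr (hy.mono fun _ hn => hn.1),
        roleHolds_ultraproduct.mpr (hy.mono fun _ hn => hn.2)⟩

lemma ultraproduct_isModel {K : ALCIKB} (hBf : ∀ n, (Bf n).IsModel K.toKB) :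
    (ultraproduct Bf).IsModel K.toKB := by
  refine (isModel_toKB_iff _ K).mpr ⟨fun pr hpr u hu => ?_, fun a ha => ?_⟩
  · rw [mem_interp_ultraproduct] at hu ⊢
    exact hu.mono fun n hn => ((isModel_toKB_iff _ K).mp (hBf n)).1 pr hpr hn
  · have hconst : ∀ᶠ n in hyperfilter ℕ, ∀ i,
        ((ultraproduct Bf).const (a.args i)).out n = (Bf n).const (a.args i) :=
      eventually_all.mpr fun i => ultraproduct.out_mk _
    exact hconst.mono fun n hn => (funext hn).symm ▸ (hBf n).2 a ha

end Ultraproduct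

section Compactness

open Filter

lemma _root_.Ultrafilter.exists_mem_forall_eventually {ι α : Type*} (U : Ultrafilter ι) {s : Set α}
    (hs : s.Finite) {p : ℕ → α → ι → Prop} (hp : ∀ {m m' x i}, m ≤ m' → p m' x i → p m x i)
    (h : ∀ m, ∀ᶠ i in U, ∃ x ∈ s, p m x i) : ∃ x ∈ s, ∀ m, ∀ᶠ i in U, p m x i := by
  by_contra! hfail
  choose! M hM using hfail
  obtain ⟨N, hN⟩ := (hs.image M).bddAbove
  obtain ⟨x, hx, hxN⟩ := (Ultrafilter.eventually_exists_mem_iff hs).mp (h N)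
  obtain ⟨i, hfalse, htrue⟩ := ((hM x hx).and (hxN.mono fun _ => hp (hN ⟨x, hx, rfl⟩))).exists
  exact hfalse htrue

lemma _root_.Filter.exists_forall_eventually_of_le_atTop {β : ℕ → Type*} [∀ n, Nonempty (β n)]
    {l : Filter ℕ} (hl : l ≤ atTop) {p : ℕ → (n : ℕ) → β n → Prop}
    (hp : ∀ {m m' n y}, m ≤ m' → p m' n y → p m n y) (h : ∀ m, ∀ᶠ n in l, ∃ y, p m n y) :
    ∃ y : ∀ n, β n, ∀ m, ∀ᶠ n in l, p m n (y n) := by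
  classical
  -- at stage `n`, realize the largest level `k ≤ n` that can be realized at all
  let k n := Nat.findGreatest (fun m => ∃ y, p m n y) n
  refine ⟨fun n => Classical.epsilon (p (k n) n), fun m => ?_⟩
  filter_upwards [h m, hl (eventually_ge_atTop m)] with n hn hmn
  exact hp (Nat.le_findGreatest hmn hn)
    (Classical.epsilon_spec (Nat.findGreatest_spec (P := fun m => ∃ y, p m n y) hmn hn))

/-- Finite outdegree of `A` is what lets the forth condition choose one successor of `A` for
all levels at once. -/
lemma isALCIBisim_ultraproduct (sg : Set (ℕ × ℕ)) {A : Str} (hA : A.FiniteOutdegree)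
    (Bf : ℕ → Str) :
    IsALCIBisim sg (ultraproduct Bf) A
      {p | ∀ m, ∀ᶠ n in hyperfilter ℕ, LevelBisim sg (Bf n) A m (p.1.out n) p.2} where
  atom p hp c hc := by
    refine ultraproduct_rel_one.trans ⟨fun h => ?_, fun h => ?_⟩
    · obtain ⟨n, hrel, hagree⟩ := (h.and (hp 0)).exists
      exact (hagree.atomsAgree c hc).mp hrel
    · exact (hp 0).mono fun n hn => (hn.atomsAgree c hc).mpr h
  forth p hp ρ hρ v hv := by
    have hsucc : ∀ m, ∀ᶠ n in hyperfilter ℕ,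
        ∃ d' ∈ {d' | roleHolds A ρ p.2 d'}, LevelBisim sg (Bf n) A m (v.out n) d' := fun m =>
      ((hp (m + 1)).and (roleHolds_ultraproduct.mp hv)).mono fun n hn =>
        hn.1.2.1 ρ hρ _ hn.2
    exact (hyperfilter ℕ).exists_mem_forall_eventually
      ((hA p.2).subset fun _ h => roleHolds.roleEdge h) (fun hmn h => h.mono hmn) hsucc
  back p hp ρ hρ d' hd' := by
    have hsucc : ∀ m, ∀ᶠ n in hyperfilter ℕ,
        ∃ w, roleHolds (Bf n) ρ (p.1.out n) w ∧ LevelBisim sg (Bf n) A m w d' := fun m =>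
      (hp (m + 1)).mono fun n hn => hn.2.2 ρ hρ d' hd'
    obtain ⟨y, hy⟩ := Filter.exists_forall_eventually_of_le_atTop
      (hyperfilter_le_cofinite.trans Nat.cofinite_eq_atTop.le)
      (fun hmn h => ⟨h.1, h.2.mono hmn⟩) hsucc
    refine ⟨ultraproduct.mk y, roleHolds_ultraproduct.mpr ?_, fun m => ?_⟩
    · filter_upwards [hy 0, ultraproduct.out_mk y] with n hn hout
      exact hout ▸ hn.1
    · filter_upwards [hy m, ultraproduct.out_mk y] with n hn hout
      exact hout ▸ hn.2

theorem exists_bisimilar_of_forall_levelBisim {sg : Set (ℕ × ℕ)} {K : ALCIKB} {A : Str}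
    (hA : A.FiniteOutdegree) {a : ℕ} {d : A.Dom}
    (h : ∀ m, ∃ B : Str, B.IsModel K.toKB ∧ LevelBisim sg B A m (B.const a) d) :
    ∃ B : Str, B.IsModel K.toKB ∧ ALCIBisimilar sg B (B.const a) A d := by
  choose Bf hBf hbisim using h
  refine ⟨ultraproduct Bf, ultraproduct_isModel hBf, _, isALCIBisim_ultraproduct sg hA Bf,
    fun m => ?_⟩
  filter_upwards [ultraproduct.out_mk fun n => (Bf n).const a,
    hyperfilter_le_cofinite (Nat.cofinite_eq_atTop ▸ eventually_ge_atTop m)] with n hout hmn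
  exact hout ▸ (hbisim n).mono hmn

end Compactness

theorem cSeparable_of_forall_not_bisimilar {K : ALCIKB} {P : Set ℕ} {b : ℕ} (hP : P.Finite)
    {A : Str} (hA : A.IsModel K.toKB) (hAfin : A.FiniteOutdegree)
    (h : ∀ a ∈ P, ¬ ∃ B : Str, B.IsModel K.toKB ∧
      ALCIBisimilar K.sigK B (B.const a) A (A.const b)) :
    K.CSeparable P {b} := by
  have hlevel : ∀ a ∈ P, ∃ m, ∀ B : Str, B.IsModel K.toKB →
      ¬ LevelBisim K.sigK B A m (B.const a) (A.const b) := fun a ha => by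
    by_contra! hm
    exact h a ha (exists_bisimilar_of_forall_levelBisim hAfin hm)
  choose! M hM using hlevel
  obtain ⟨N, hN⟩ := (hP.image M).bddAbove
  refine ⟨.neg (charConcept K.sigK_finite hAfin N (A.const b)),
    csig_charConcept K.sigK_finite hAfin N _, fun a ha B hB hmem => ?_, ?_⟩
  · exact hM a ha B hB (((mem_interp_charConcept _ _ N _ _).mp hmem).mono (hN ⟨a, ha, rfl⟩))
  · rintro _ rfl hall
    exact hall A hA ((mem_interp_charConcept _ _ N _ _).mpr (LevelBisim.refl _ A N _))

theorem statement_11_general (K : ALCIKB) (P : Set ℕ) (b : ℕ)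
    (hPcons : ∀ a ∈ P, a ∈ K.db.consts) (hbcons : b ∈ K.db.consts) :
    K.CSeparable P {b} ↔
      ∃ A : Str, A.IsForestModel K ∧ A.FiniteOutdegree ∧
        ∀ a ∈ P, ¬ ∃ B : Str, B.IsModel K.toKB ∧
          ALCIBisimilar K.sigK B (B.const a) A (A.const b) :=
  ⟨exists_forestModel_of_cSeparable hbcons, fun ⟨_, hA, hAfin, hsep⟩ =>
    cSeparable_of_forall_not_bisimilar (K.db.consts_finite.subset hPcons) hA.1 hAfin hsep⟩

/-- ALCI-separability via forest models and bisimulations. -/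
theorem statement_11 (K : ALCIKB) (P : Set ℕ) (b : ℕ) (hPne : P.Nonempty)
    (hPcons : ∀ a ∈ P, a ∈ K.db.consts) (hbcons : b ∈ K.db.consts) :
    K.CSeparable P {b} ↔
      ∃ A : Str, A.IsForestModel K ∧ A.FiniteOutdegree ∧
        ∀ a ∈ P, ¬ ∃ B : Str, B.IsModel K.toKB ∧
          ALCIBisimilar K.sigK B (B.const a) A (A.const b) :=
  statement_11_general K P b hPcons hbcons

end Sep
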